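/- arXiv:1302.6037 — 3 statements merged into one kernel-verified Lean document; each statement's English description precedes it below -/
import Mathlib

section
/- Let d be a graded derivation on a complete graded Lie algebra L that is invertible on U_{≥1} with inverse I, and let δ be a graded derivation that commutes with d (hence with I). Fix x ∈ L and let φ_α = 1 + Σ_{n≥1} α^n R^{[n]}(x) be the perturbative solution of the Atkinson recursion φ_α = 1 + α·I(φ_α·x), where R^{[1]}(x) = I(x) and R^{[n+1]}(x) = I(R^{[n]}(x)·x). Then log_δ(φ_α) = φ_α^{-1}·δ(φ_α) = Σ_{n≥1} α^n 𝓛_δ^{[n]}(x), where 𝓛_δ^{[1]}(x) = I(δ(x)) and 𝓛_δ^{[n+1]}(x) = I([𝓛_δ^{[n]}(x), x]). -/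
/-!
Common setting: a complete graded Lie algebra `L` over a field `k` of
characteristic zero, sitting (as the Lie algebra of primitive elements)
inside its completed universal enveloping algebra `U = ∏_{n ≥ 0} U_n`.

We model the completed graded algebra `U` abstractly: `proj n` is the
projection onto the degree-`n` homogeneous component, and `hsum`
reconstructs an element from a family of homogeneous components
(this expresses the completeness `U = ∏_n U_n`).
-/

open Finset

structure CGA (k U : Type*) [Field k] [Ring U] [Algebra k U] where
  /-- projection onto the degree `n` homogeneous component -/
  proj : ℕ → U →ₗ[k] U
  proj_proj : ∀ m n x, proj m (proj n x) = if m = n then proj n x else 0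
  /-- summation of a family of homogeneous components (completeness) -/
  hsum : (ℕ → U) → U
  hsum_proj : ∀ x : U, hsum (fun n => proj n x) = x
  proj_hsum : ∀ c : ℕ → U, (∀ n, proj n (c n) = c n) → ∀ n, proj n (hsum c) = c n
  proj_one : ∀ n, proj n (1 : U) = if n = 0 then (1 : U) else 0
  proj_mul : ∀ n x y,
    proj n (x * y) = ∑ p ∈ Finset.range (n + 1), proj p x * proj (n - p) y
  /-- the complete graded Lie algebra `L ⊆ U` (primitive elements) -/
  L : Submodule k U
  L_graded : ∀ n, ∀ x ∈ L, proj n x ∈ L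
  L_pos : ∀ x ∈ L, proj 0 x = 0
  L_bracket : ∀ x ∈ L, ∀ y ∈ L, x * y - y * x ∈ L
  /-- homogeneous components of `L` are finite dimensional -/
  L_findim : ∀ n, Module.Finite k
    ↥(L ⊓ LinearMap.eqLocus (proj n) (LinearMap.id : U →ₗ[k] U))

namespace CGA

variable {k U : Type*} [Field k] [Ring U] [Algebra k U]

/-- Sum of a series `∑_s y s` whose `s`-th term has valuation at least `s`. -/
def ssum (S : CGA k U) (y : ℕ → U) : U :=
  S.hsum fun n => ∑ s ∈ Finset.range (n + 1), S.proj n (y s)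

/-- The exponential `exp x = ∑_s x^s / s!` (for `x ∈ U_{≥1}`). -/
noncomputable def expS (S : CGA k U) (x : U) : U :=
  S.ssum fun s => ((s.factorial : k)⁻¹) • x ^ s

/-- The inverse of an element of `1 + U_{≥1}`, given by the geometric series. -/
noncomputable def inv1 (S : CGA k U) (φ : U) : U :=
  S.ssum fun s => (1 - φ) ^ s

/-- The `d`-logarithm `log_d φ = φ⁻¹ · d(φ)`. -/
noncomputable def logd (S : CGA k U) (d : U →ₗ[k] U) (φ : U) : U :=
  S.inv1 φ * d φ

/-- Group-like elements: exponentials `exp(a)` of elements `a ∈ L`. -/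
noncomputable def GroupLike (S : CGA k U) (φ : U) : Prop :=
  ∃ a ∈ S.L, φ = S.expS a

/-- A graded derivation on `U` (restricting to a graded derivation of `L`). -/
structure IsGradedDerivation (S : CGA k U) (d : U →ₗ[k] U) : Prop where
  leibniz : ∀ x y, d (x * y) = d x * y + x * d y
  graded : ∀ n x, d (S.proj n x) = S.proj n (d x)
  mapsL : ∀ x ∈ S.L, d x ∈ S.L

/-- `u ∼_d v` : some group-like `φ` `d`-conjugates `u` to `v`,
i.e. `d(φ) + v·φ = φ·u`. -/
noncomputable def dConj (S : CGA k U) (d : U →ₗ[k] U) (u v : U) : Prop :=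
  ∃ φ : U, S.GroupLike φ ∧ d φ + v * φ = φ * u

end CGA

open PowerSeries in
/-- The coefficients of the perturbative solution `φ_α = 1 + ∑_{n≥1} αⁿ R⁽ⁿ⁾(x)`
of Atkinson's recursion `φ_α = 1 + α·I(φ_α·x)`:
`R⁽¹⁾(x) = I(x)` and `R⁽ⁿ⁺¹⁾(x) = I(R⁽ⁿ⁾(x)·x)` (with 0-th coefficient `1`). -/
def atkinsonCoeff {k U : Type*} [Field k] [Ring U] [Algebra k U]
    (I : U →ₗ[k] U) (x : U) : ℕ → U
  | 0 => 1
  | n + 1 => I (atkinsonCoeff I x n * x)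

/-- The coefficients `𝓛_δ⁽ⁿ⁾(x)`: `𝓛_δ⁽¹⁾(x) = I(δ(x))` and
`𝓛_δ⁽ⁿ⁺¹⁾(x) = I([𝓛_δ⁽ⁿ⁾(x), x])` (with 0-th coefficient `0`). -/
def ellCoeff {k U : Type*} [Field k] [Ring U] [Algebra k U]
    (I δ : U →ₗ[k] U) (x : U) : ℕ → U
  | 0 => 0
  | 1 => I (δ x)
  | n + 2 => I (ellCoeff I δ x (n + 1) * x - x * ellCoeff I δ x (n + 1))

/-- Theorem `thstrigen`: let `d` be an overall invertible
graded derivation with inverse `I`, let `δ` be a graded derivation commuting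
with `d`, and let `x ∈ L`.  Let `φ_α = 1 + ∑_{n≥1} αⁿ R⁽ⁿ⁾(x)` be the
perturbative solution of Atkinson's recursion (a formal power series in the
perturbative parameter `α` with coefficients in `U`).  Then
`log_δ(φ_α) = φ_α⁻¹ · δ(φ_α) = ∑_{n≥1} αⁿ 𝓛_δ⁽ⁿ⁾(x)`. -/
theorem logd_perturbative_solution {k U : Type*} [Field k] [CharZero k]
    [Ring U] [Algebra k U] (S : CGA k U) (d δ : U →ₗ[k] U)
    (hd : S.IsGradedDerivation d) (hδ : S.IsGradedDerivation δ)
    (hcomm : ∀ x : U, d (δ x) = δ (d x)) (I : U →ₗ[k] U)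
    (hIgraded : ∀ (n : ℕ) (x : U), I (S.proj n x) = S.proj n (I x))
    (hIpos : ∀ x : U, S.proj 0 x = 0 → S.proj 0 (I x) = 0)
    (hdI : ∀ x : U, S.proj 0 x = 0 → d (I x) = x)
    (hId : ∀ x : U, S.proj 0 x = 0 → I (d x) = x)
    (x : U) (hx : x ∈ S.L)
    -- `Ψ` is the inverse `φ_α⁻¹` of the perturbative solution `φ_α`
    (Ψ : PowerSeries U)
    (hΨ₁ : Ψ * PowerSeries.mk (atkinsonCoeff I x) = 1)
    (hΨ₂ : PowerSeries.mk (atkinsonCoeff I x) * Ψ = 1) :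
    Ψ * PowerSeries.mk (fun n => δ (atkinsonCoeff I x n)) =
      PowerSeries.mk (ellCoeff I δ x) := by

  classical
  -- abbreviations
  have hδ1 : δ (1 : U) = 0 := by
    have h := hδ.leibniz 1 1
    rw [one_mul, mul_one, one_mul] at h
    exact left_eq_add.mp h
  have hd1 : d (1 : U) = 0 := by
    have h := hd.leibniz 1 1
    rw [one_mul, mul_one, one_mul] at h
    exact left_eq_add.mp h
  have hp0mul : ∀ a b : U, S.proj 0 (a * b) = S.proj 0 a * S.proj 0 b := by
    intro a b
    have h := S.proj_mul 0 a b
    simpa using h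
  have hx0 : S.proj 0 x = 0 := S.L_pos x hx
  have hδx0 : S.proj 0 (δ x) = 0 := by
    rw [← hδ.graded 0 x, hx0, map_zero]
  have hIcomm : ∀ y : U, S.proj 0 y = 0 → δ (I y) = I (δ y) := by
    intro y hy
    have h0 : S.proj 0 (δ (I y)) = 0 := by
      rw [← hδ.graded 0 (I y), hIpos y hy, map_zero]
    have hdz : d (δ (I y)) = δ y := by rw [hcomm, hdI y hy]
    calc δ (I y) = I (d (δ (I y))) := (hId _ h0).symm
      _ = I (δ y) := by rw [hdz]
  have hl0 : ∀ m, S.proj 0 (ellCoeff I δ x m) = 0 := by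
    intro m
    match m with
    | 0 => simp [ellCoeff]
    | 1 => exact hIpos _ hδx0
    | (m + 2) =>
      refine hIpos _ ?_
      rw [map_sub, hp0mul, hp0mul, hx0]
      simp
  have hRx0 : ∀ n, S.proj 0 (atkinsonCoeff I x n * x) = 0 := by
    intro n; rw [hp0mul, hx0, mul_zero]
  have hdR : ∀ n, d (atkinsonCoeff I x (n + 1)) = atkinsonCoeff I x n * x :=
    fun n => hdI _ (hRx0 n)
  have hlsub0 : ∀ m, S.proj 0
      (ellCoeff I δ x (m + 1) * x - x * ellCoeff I δ x (m + 1)) = 0 := by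
    intro m
    rw [map_sub, hp0mul, hp0mul, hx0, hl0]
    simp
  have hdl : ∀ m, d (ellCoeff I δ x (m + 1)) =
      ellCoeff I δ x m * x - x * ellCoeff I δ x m
        + (if m = 0 then δ x else 0) := by
    intro m
    match m with
    | 0 =>
      show d (I (δ x)) = _
      rw [hdI _ hδx0]
      simp [ellCoeff]
    | (m + 1) =>
      show d (I (ellCoeff I δ x (m + 1) * x - x * ellCoeff I δ x (m + 1))) = _
      rw [hdI _ (hlsub0 m)]
      simp
  have main : ∀ n, δ (atkinsonCoeff I x n) =
      ∑ p ∈ Finset.range (n + 1),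
        atkinsonCoeff I x p * ellCoeff I δ x (n - p) := by
    intro n
    induction n with
    | zero => simp [atkinsonCoeff, ellCoeff, hδ1]
    | succ n IH =>
      have hTtrunc : ∑ p ∈ Finset.range (n + 2),
            atkinsonCoeff I x p * ellCoeff I δ x (n + 1 - p)
          = ∑ p ∈ Finset.range (n + 1),
            atkinsonCoeff I x p * ellCoeff I δ x (n + 1 - p) := by
        rw [Finset.sum_range_succ]
        simp [ellCoeff]
      set T := ∑ p ∈ Finset.range (n + 1),
        atkinsonCoeff I x p * ellCoeff I δ x (n + 1 - p) with hTdef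
      have hT0 : S.proj 0 T = 0 := by
        rw [hTdef, map_sum]
        refine Finset.sum_eq_zero fun p hp => ?_
        have hple : p ≤ n := Nat.lt_succ_iff.mp (Finset.mem_range.mp hp)
        have : n + 1 - p = (n - p) + 1 := by omega
        rw [hp0mul, this, hl0, mul_zero]
      have hdT : d T = δ (atkinsonCoeff I x n) * x
          + atkinsonCoeff I x n * δ x := by
        have step1 : d T = ∑ p ∈ Finset.range (n + 1),
            (d (atkinsonCoeff I x p) * ellCoeff I δ x (n + 1 - p)
              + atkinsonCoeff I x p * d (ellCoeff I δ x (n + 1 - p))) := by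
          rw [hTdef, map_sum]
          exact Finset.sum_congr rfl fun p _ => hd.leibniz _ _
        rw [step1, Finset.sum_add_distrib]
        have hA : ∑ p ∈ Finset.range (n + 1),
            d (atkinsonCoeff I x p) * ellCoeff I δ x (n + 1 - p)
            = ∑ i ∈ Finset.range n,
              (atkinsonCoeff I x i * x) * ellCoeff I δ x (n - i) := by
          rw [Finset.sum_range_succ']
          show (∑ i ∈ Finset.range n,
              d (atkinsonCoeff I x (i + 1)) * ellCoeff I δ x (n + 1 - (i + 1)))
            + d (atkinsonCoeff I x 0) * ellCoeff I δ x (n + 1 - 0) = _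
          have h0 : d (atkinsonCoeff I x 0) = 0 := by
            show d 1 = 0; exact hd1
          rw [h0, zero_mul, add_zero]
          refine Finset.sum_congr rfl fun i hi => ?_
          rw [hdR, Nat.succ_sub_succ]
        have hB : ∑ p ∈ Finset.range (n + 1),
            atkinsonCoeff I x p * d (ellCoeff I δ x (n + 1 - p))
            = ∑ p ∈ Finset.range (n + 1),
              atkinsonCoeff I x p *
                (ellCoeff I δ x (n - p) * x - x * ellCoeff I δ x (n - p)
                  + (if n - p = 0 then δ x else 0)) := by
          refine Finset.sum_congr rfl fun p hp => ?_
          have hple : p ≤ n := Nat.lt_succ_iff.mp (Finset.mem_range.mp hp)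
          have hnp : n + 1 - p = (n - p) + 1 := by omega
          rw [hnp, hdl]
        rw [hA, hB]
        have hsplit : ∑ p ∈ Finset.range (n + 1),
            atkinsonCoeff I x p *
              (ellCoeff I δ x (n - p) * x - x * ellCoeff I δ x (n - p)
                + (if n - p = 0 then δ x else 0))
            = (∑ p ∈ Finset.range (n + 1),
                atkinsonCoeff I x p * (ellCoeff I δ x (n - p) * x))
              - (∑ p ∈ Finset.range (n + 1),
                atkinsonCoeff I x p * (x * ellCoeff I δ x (n - p)))
              + (∑ p ∈ Finset.range (n + 1),
                atkinsonCoeff I x p * (if n - p = 0 then δ x else 0)) := by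
          rw [← Finset.sum_sub_distrib, ← Finset.sum_add_distrib]
          refine Finset.sum_congr rfl fun p _ => ?_
          rw [mul_add, mul_sub]
        rw [hsplit]
        have h1 : ∑ p ∈ Finset.range (n + 1),
            atkinsonCoeff I x p * (ellCoeff I δ x (n - p) * x)
            = δ (atkinsonCoeff I x n) * x := by
          rw [IH, Finset.sum_mul]
          exact Finset.sum_congr rfl fun p _ => (mul_assoc _ _ _).symm
        have h2 : ∑ p ∈ Finset.range (n + 1),
            atkinsonCoeff I x p * (x * ellCoeff I δ x (n - p))
            = ∑ i ∈ Finset.range n,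
              (atkinsonCoeff I x i * x) * ellCoeff I δ x (n - i) := by
          rw [Finset.sum_range_succ, Nat.sub_self]
          show _ + atkinsonCoeff I x n * (x * (0 : U)) = _
          rw [mul_zero, mul_zero, add_zero]
          exact Finset.sum_congr rfl fun i _ => (mul_assoc _ _ _).symm
        have h3 : ∑ p ∈ Finset.range (n + 1),
            atkinsonCoeff I x p * (if n - p = 0 then δ x else 0)
            = atkinsonCoeff I x n * δ x := by
          rw [Finset.sum_range_succ, Nat.sub_self, if_pos rfl]
          have : ∑ p ∈ Finset.range n,
              atkinsonCoeff I x p * (if n - p = 0 then δ x else 0) = 0 := by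
            refine Finset.sum_eq_zero fun p hp => ?_
            have : n - p ≠ 0 := by
              have := Finset.mem_range.mp hp; omega
            rw [if_neg this, mul_zero]
          rw [this, zero_add]
        rw [h1, h2, h3]
        abel
      have hstep : δ (atkinsonCoeff I x (n + 1)) = T := by
        have h1 : δ (atkinsonCoeff I x (n + 1))
            = I (δ (atkinsonCoeff I x n * x)) := by
          show δ (I (atkinsonCoeff I x n * x)) = _
          rw [hIcomm _ (hRx0 n)]
        rw [h1, hδ.leibniz, ← hdT, hId T hT0]
      rw [hstep, hTdef]
      exact hTtrunc.symm
  have key : PowerSeries.mk (fun n => δ (atkinsonCoeff I x n))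
      = PowerSeries.mk (atkinsonCoeff I x) * PowerSeries.mk (ellCoeff I δ x) := by
    ext n
    rw [PowerSeries.coeff_mul, Finset.Nat.sum_antidiagonal_eq_sum_range_succ_mk]
    simp only [PowerSeries.coeff_mk]
    exact main n
  rw [key, ← mul_assoc, hΨ₁, one_mul]
end

section
/- Let d be a graded derivation on a complete graded Lie algebra L satisfying L = ker_L d ⊕ d(L). If u ∈ L is d-conjugate to 0, then 0 is the unique d-normal form of u: the only element v ∈ ker_L d with v ∼_d u is v = 0. -/
/-!
Common setting: a complete graded Lie algebra `L` over a field `k` of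
characteristic zero, sitting (as the Lie algebra of primitive elements)
inside its completed universal enveloping algebra `U = ∏_{n ≥ 0} U_n`.

We model the completed graded algebra `U` abstractly: `proj n` is the
projection onto the degree-`n` homogeneous component, and `hsum`
reconstructs an element from a family of homogeneous components
(this expresses the completeness `U = ∏_n U_n`).
-/

open Finset

namespace CGA

variable {k U : Type*} [Field k] [Ring U] [Algebra k U]

section Toolkit

variable (S : CGA k U)

lemma ext_proj {x y : U} (h : ∀ n, S.proj n x = S.proj n y) : x = y := by
  rw [← S.hsum_proj x, ← S.hsum_proj y]
  exact congrArg S.hsum (funext h)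

lemma proj_proj_self (n : ℕ) (x : U) : S.proj n (S.proj n x) = S.proj n x := by
  rw [S.proj_proj]; simp

lemma proj_ssum (y : ℕ → U) (n : ℕ) :
    S.proj n (S.ssum y) = ∑ s ∈ range (n + 1), S.proj n (y s) :=
  S.proj_hsum _ (fun m => by
    rw [map_sum]
    exact Finset.sum_congr rfl fun s _ => S.proj_proj_self m (y s)) n

/-- valuation at least `s` -/
def vge (s : ℕ) (x : U) : Prop := ∀ p < s, S.proj p x = 0

lemma vge_zero_arg (s : ℕ) : S.vge s (0 : U) := fun _ _ => map_zero _

lemma vge_smul (s : ℕ) (α : k) {x : U} (hx : S.vge s x) : S.vge s (α • x) :=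
  fun p hp => by rw [map_smul, hx p hp, smul_zero]

lemma vge_mul {s t : ℕ} {x y : U} (hx : S.vge s x) (hy : S.vge t y) :
    S.vge (s + t) (x * y) := by
  intro p hp
  rw [S.proj_mul]
  apply Finset.sum_eq_zero
  intro i hi
  simp only [Finset.mem_range] at hi
  by_cases h : i < s
  · rw [hx i h, zero_mul]
  · have : p - i < t := by omega
    rw [hy _ this, mul_zero]

lemma vge_sub {s : ℕ} {x y : U} (hx : S.vge s x) (hy : S.vge s y) :
    S.vge s (x - y) := fun p hp => by rw [map_sub, hx p hp, hy p hp, sub_zero]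

lemma vge_one (x : U) (hx : S.proj 0 x = 0) : S.vge 1 x := by
  intro p hp
  interval_cases p
  exact hx

lemma vge_pow {x : U} (hx : S.proj 0 x = 0) (s : ℕ) : S.vge s (x ^ s) := by
  induction s with
  | zero => intro p hp; omega
  | succ s ih =>
    rw [pow_succ]
    exact S.vge_mul ih (S.vge_one x hx)

lemma ssum_mul (y : ℕ → U) (hy : ∀ s, S.vge s (y s)) (w : U) :
    S.ssum y * w = S.ssum fun s => y s * w := by
  apply S.ext_proj; intro n
  rw [S.proj_mul, S.proj_ssum]
  have h1 : ∀ p ∈ range (n + 1), S.proj p (S.ssum y) * S.proj (n - p) w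
      = ∑ s ∈ range (n + 1), S.proj p (y s) * S.proj (n - p) w := by
    intro p _
    rw [S.proj_ssum, Finset.sum_mul]
    apply Finset.sum_subset
    · intro s hs
      simp only [Finset.mem_range] at *
      omega
    · intro s _ hns
      simp only [Finset.mem_range, not_lt] at hns
      rw [hy s p (by omega), zero_mul]
  rw [Finset.sum_congr rfl h1, Finset.sum_comm]
  apply Finset.sum_congr rfl
  intro s _
  rw [S.proj_mul]

lemma mul_ssum (y : ℕ → U) (hy : ∀ s, S.vge s (y s)) (w : U) :
    w * S.ssum y = S.ssum fun s => w * y s := by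
  apply S.ext_proj; intro n
  rw [S.proj_mul, S.proj_ssum]
  have h1 : ∀ p ∈ range (n + 1), S.proj p w * S.proj (n - p) (S.ssum y)
      = ∑ s ∈ range (n + 1), S.proj p w * S.proj (n - p) (y s) := by
    intro p hp
    rw [S.proj_ssum, Finset.mul_sum]
    apply Finset.sum_subset
    · intro s hs
      simp only [Finset.mem_range] at *
      omega
    · intro s _ hns
      simp only [Finset.mem_range, not_lt] at hns
      rw [hy s (n - p) (by omega), mul_zero]
  rw [Finset.sum_congr rfl h1, Finset.sum_comm]
  apply Finset.sum_congr rfl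
  intro s _
  rw [S.proj_mul]

lemma ssum_ssum (w : ℕ → ℕ → U) (hw : ∀ s t, S.vge (s + t) (w s t)) :
    S.ssum (fun s => S.ssum (w s)) = S.ssum fun m => ∑ s ∈ range (m + 1), w s (m - s) := by
  apply S.ext_proj; intro n
  rw [S.proj_ssum, S.proj_ssum]
  have hL : ∀ s ∈ range (n + 1), S.proj n (S.ssum (w s))
      = ∑ t ∈ range (n + 1 - s), S.proj n (w s t) := by
    intro s hs
    rw [S.proj_ssum]
    symm
    apply Finset.sum_subset
    · intro t ht
      simp only [Finset.mem_range] at *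
      omega
    · intro t ht hts
      simp only [Finset.mem_range, not_lt] at ht hts
      exact hw s t n (by omega)
  rw [Finset.sum_congr rfl hL,
    Finset.sum_congr rfl (fun m (_ : m ∈ range (n+1)) =>
      (map_sum (S.proj n) (fun s => w s (m - s)) (range (m+1))))]
  rw [Finset.sum_sigma', Finset.sum_sigma']
  apply Finset.sum_nbij' (i := fun p => (⟨p.1 + p.2, p.1⟩ : Σ _ : ℕ, ℕ))
    (j := fun q => (⟨q.2, q.1 - q.2⟩ : Σ _ : ℕ, ℕ))
  · intro p hp
    simp only [Finset.mem_sigma, Finset.mem_range] at *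
    omega
  · intro q hq
    simp only [Finset.mem_sigma, Finset.mem_range] at *
    omega
  · intro p hp
    simp only [Finset.mem_sigma, Finset.mem_range] at hp
    ext <;> simp
  · intro q hq
    simp only [Finset.mem_sigma, Finset.mem_range] at hq
    ext <;> simp <;> omega
  · intro p hp
    simp

lemma ssum_mul_ssum (y z : ℕ → U) (hy : ∀ s, S.vge s (y s)) (hz : ∀ t, S.vge t (z t)) :
    S.ssum y * S.ssum z = S.ssum fun m => ∑ s ∈ range (m + 1), y s * z (m - s) := by
  rw [S.ssum_mul y hy]
  have h : (fun s => y s * S.ssum z) = fun s => S.ssum fun t => y s * z t := by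
    funext s
    exact S.mul_ssum z hz (y s)
  rw [h]
  exact S.ssum_ssum _ fun s t => S.vge_mul (hy s) (hz t)

lemma map_ssum (D : U →ₗ[k] U) (hD : ∀ n x, D (S.proj n x) = S.proj n (D x)) (y : ℕ → U) :
    D (S.ssum y) = S.ssum fun s => D (y s) := by
  apply S.ext_proj; intro n
  rw [S.proj_ssum, ← hD, S.proj_ssum, map_sum]
  exact Finset.sum_congr rfl fun s _ => hD n (y s)

end Toolkit

end CGA

namespace CGA

variable {k U : Type*} [Field k] [Ring U] [Algebra k U]

section Delta

variable (S : CGA k U)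

noncomputable def deltaFun (x : U) : U := S.hsum fun n => (n : k) • S.proj n x

lemma proj_deltaAux (x : U) (n : ℕ) :
    S.proj n (S.deltaFun x) = (n : k) • S.proj n x :=
  S.proj_hsum _ (fun m => by rw [map_smul, S.proj_proj_self]) n

/-- The Euler derivation: multiplication by `n` in degree `n`. -/
noncomputable def delta : U →ₗ[k] U where
  toFun := S.deltaFun
  map_add' x y := S.ext_proj fun n => by
    show S.proj n (S.deltaFun (x + y)) = S.proj n (S.deltaFun x + S.deltaFun y)
    rw [S.proj_deltaAux, map_add, map_add, S.proj_deltaAux, S.proj_deltaAux, smul_add]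
  map_smul' α x := S.ext_proj fun n => by
    show S.proj n (S.deltaFun (α • x)) = S.proj n (α • S.deltaFun x)
    rw [S.proj_deltaAux, map_smul, map_smul, S.proj_deltaAux, smul_comm]

lemma proj_delta (n : ℕ) (x : U) : S.proj n (S.delta x) = (n : k) • S.proj n x :=
  S.proj_deltaAux x n

lemma delta_proj (n : ℕ) (x : U) : S.delta (S.proj n x) = S.proj n (S.delta x) :=
  S.ext_proj fun m => by
    rw [S.proj_delta, S.proj_proj, S.proj_proj, S.proj_delta]
    by_cases h : m = n
    · subst h; simp
    · simp [h]

lemma delta_mul (x y : U) : S.delta (x * y) = S.delta x * y + x * S.delta y := by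
  apply S.ext_proj; intro n
  rw [S.proj_delta, map_add, S.proj_mul, S.proj_mul, S.proj_mul, Finset.smul_sum,
    ← Finset.sum_add_distrib]
  apply Finset.sum_congr rfl
  intro p hp
  simp only [Finset.mem_range] at hp
  rw [S.proj_delta, S.proj_delta, smul_mul_assoc, mul_smul_comm, ← add_smul,
    ← Nat.cast_add, Nat.add_sub_cancel' (by omega : p ≤ n)]

lemma delta_one : S.delta (1 : U) = 0 := by
  apply S.ext_proj; intro n
  rw [S.proj_delta, S.proj_one, map_zero]
  by_cases h : n = 0
  · subst h; simp
  · simp [h]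

lemma delta_pow (c : U) (s : ℕ) :
    S.delta (c ^ s) = ∑ p ∈ range s, c ^ p * S.delta c * c ^ (s - 1 - p) := by
  induction s with
  | zero => simpa using S.delta_one
  | succ s ih =>
    rw [pow_succ, S.delta_mul, ih, Finset.sum_mul, Finset.sum_range_succ]
    congr 1
    · apply Finset.sum_congr rfl
      intro p hp
      simp only [Finset.mem_range] at hp
      have he : s - 1 - p + 1 = s + 1 - 1 - p := by omega
      rw [mul_assoc, ← pow_succ, he]
    · simp

end Delta

section AdE

variable (k) in
/-- the inner derivation `ad c` as a linear endomorphism. -/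
noncomputable def adE (c : U) : U →ₗ[k] U :=
  LinearMap.mulLeft k c - LinearMap.mulRight k c

variable (k) in
lemma adE_pow_succ (c x : U) (m : ℕ) :
    (adE k c ^ (m + 1)) x = c * (adE k c ^ m) x - (adE k c ^ m) x * c := by
  rw [pow_succ']
  rfl

variable (S : CGA k U) in
lemma vge_adE_pow {c : U} (hc : S.proj 0 c = 0) {t : ℕ} {x : U} (hx : S.vge t x) (m : ℕ) :
    S.vge (t + m) ((adE k c ^ m) x) := by
  induction m with
  | zero => simpa using hx
  | succ m ih =>
    rw [adE_pow_succ]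
    apply S.vge_sub
    · have := S.vge_mul (S.vge_one c hc) ih
      intro p hp
      exact this p (by omega)
    · have := S.vge_mul ih (S.vge_one c hc)
      intro p hp
      exact this p (by omega)

variable (k) in
lemma commute_adE_mulRight (c : U) : Commute (adE k c) (LinearMap.mulRight k c) :=
  ((LinearMap.commute_mulLeft_right c c).sub_left (Commute.refl _))

variable (k) in
lemma adE_pow_mul_pow (c x : U) (a t : ℕ) :
    (adE k c ^ a) (x * c ^ t) = (adE k c ^ a) x * c ^ t := by
  have h : (adE k c ^ a) * (LinearMap.mulRight k c ^ t)
      = (LinearMap.mulRight k c ^ t) * (adE k c ^ a) :=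
    ((commute_adE_mulRight k c).pow_pow a t)
  have h1 : x * c ^ t = (LinearMap.mulRight k c ^ t) x := by
    rw [LinearMap.pow_mulRight, LinearMap.mulRight_apply]
  rw [h1, ← Module.End.mul_apply, h, Module.End.mul_apply, LinearMap.pow_mulRight,
    LinearMap.mulRight_apply]

variable (k) in
lemma mulLeft_pow_expand (c x : U) (s : ℕ) :
    c ^ s * x = ∑ m ∈ range (s + 1), s.choose m • ((adE k c ^ m) x * c ^ (s - m)) := by
  have hl : LinearMap.mulLeft k c = adE k c + LinearMap.mulRight k c := by
    unfold adE; abel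
  have h1 : c ^ s * x = (LinearMap.mulLeft k c ^ s) x := by
    rw [LinearMap.pow_mulLeft, LinearMap.mulLeft_apply]
  rw [h1, hl, (commute_adE_mulRight k c).add_pow, LinearMap.sum_apply]
  apply Finset.sum_congr rfl
  intro m _
  rw [((commute_adE_mulRight k c).pow_pow m (s - m)).eq, mul_assoc, Module.End.mul_apply,
    Module.End.mul_apply]
  have hcast : ((s.choose m : ℕ) : U →ₗ[k] U) x = s.choose m • x := by
    simp [Module.End.natCast_apply]
  rw [hcast, map_nsmul, map_nsmul, LinearMap.pow_mulRight, LinearMap.mulRight_apply]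

lemma hockey (s a : ℕ) : ∑ p ∈ range s, p.choose a = s.choose (a + 1) := by
  induction s with
  | zero => simp
  | succ s ih =>
    rw [Finset.sum_range_succ, ih, Nat.choose_succ_succ, add_comm]

variable (k) in
lemma sum_pow_expand (c x : U) (s : ℕ) :
    ∑ p ∈ range s, c ^ p * x * c ^ (s - 1 - p)
      = ∑ a ∈ range s, s.choose (a + 1) • ((adE k c ^ a) x * c ^ (s - 1 - a)) := by
  have h1 : ∀ p ∈ range s, c ^ p * x * c ^ (s - 1 - p)
      = ∑ a ∈ range s, p.choose a • ((adE k c ^ a) x * c ^ (s - 1 - a)) := by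
    intro p hp
    simp only [Finset.mem_range] at hp
    rw [mul_assoc, mulLeft_pow_expand k c (x * c ^ (s - 1 - p)) p]
    have hsub : range (p + 1) ⊆ range s := by
      intro q hq; simp only [Finset.mem_range] at *; omega
    have hzero : ∀ a ∈ range s, a ∉ range (p + 1) →
        p.choose a • ((adE k c ^ a) (x * c ^ (s - 1 - p)) * c ^ (p - a)) = 0 := by
      intro a _ hna
      simp only [Finset.mem_range, not_lt] at hna
      rw [Nat.choose_eq_zero_of_lt (by omega), zero_smul]
    rw [Finset.sum_subset hsub hzero]
    apply Finset.sum_congr rfl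
    intro a ha
    simp only [Finset.mem_range] at ha
    by_cases hap : p < a
    · rw [Nat.choose_eq_zero_of_lt hap, zero_smul, zero_smul]
    · rw [adE_pow_mul_pow, mul_assoc, ← pow_add]
      congr 3
      omega
  rw [Finset.sum_congr rfl h1, Finset.sum_comm]
  apply Finset.sum_congr rfl
  intro a _
  rw [← Finset.sum_smul, hockey]

end AdE

end CGA

namespace CGA

variable {k U : Type*} [Field k] [Ring U] [Algebra k U]

section ExpLemmas

lemma fact_inv_choose [CharZero k] {m s : ℕ} (h : m ≤ s) :
    ((s.factorial : k))⁻¹ * (s.choose m : k)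
      = ((m.factorial : k))⁻¹ * (((s - m).factorial : k))⁻¹ := by
  have hh : ((s.choose m : ℕ) : k) * (m.factorial : k) * ((s - m).factorial : k)
      = (s.factorial : k) := by
    exact_mod_cast congrArg (Nat.cast : ℕ → k) (Nat.choose_mul_factorial_mul_factorial h)
  have h1 : (m.factorial : k) ≠ 0 := Nat.cast_ne_zero.mpr m.factorial_ne_zero
  have h2 : ((s - m).factorial : k) ≠ 0 := Nat.cast_ne_zero.mpr (s - m).factorial_ne_zero
  have h3 : (s.factorial : k) ≠ 0 := Nat.cast_ne_zero.mpr s.factorial_ne_zero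
  field_simp
  linear_combination hh

variable (S : CGA k U)

lemma vge_expS_term {c : U} (hc : S.proj 0 c = 0) (s : ℕ) :
    S.vge s (((s.factorial : k))⁻¹ • c ^ s) :=
  S.vge_smul _ _ (S.vge_pow hc s)

lemma proj_expS_zero (c : U) : S.proj 0 (S.expS c) = 1 := by
  unfold expS
  rw [S.proj_ssum]
  simp [S.proj_one, Nat.factorial]

lemma expS_mul_expS_neg [CharZero k] {c : U} (hc : S.proj 0 c = 0) : S.expS c * S.expS (-c) = 1 := by
  have hc' : S.proj 0 (-c) = 0 := by rw [map_neg, hc, neg_zero]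
  unfold expS
  rw [S.ssum_mul_ssum _ _ (fun s => S.vge_expS_term hc s) (fun t => S.vge_expS_term hc' t)]
  have hm : ∀ m, (∑ s ∈ range (m + 1),
      (((s.factorial : k))⁻¹ • c ^ s) * ((((m - s).factorial : k))⁻¹ • (-c) ^ (m - s)))
      = if m = 0 then (1 : U) else 0 := by
    intro m
    rcases Nat.eq_zero_or_pos m with hm0 | hm0
    · subst hm0; simp [Nat.factorial]
    · rw [if_neg (by omega)]
      have hterm : ∀ s ∈ range (m + 1),
          (((s.factorial : k))⁻¹ • c ^ s) * ((((m - s).factorial : k))⁻¹ • (-c) ^ (m - s))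
          = (((s.factorial : k))⁻¹ * ((((m - s).factorial : k))⁻¹ * (-1 : k) ^ (m - s))) • c ^ m := by
        intro s hs
        simp only [Finset.mem_range] at hs
        rw [← neg_one_smul k c, smul_pow, smul_smul, smul_mul_smul_comm, ← pow_add,
          Nat.add_sub_cancel' (by omega : s ≤ m)]
      rw [Finset.sum_congr rfl hterm, ← Finset.sum_smul]
      have hcoef : (∑ s ∈ range (m + 1),
          ((s.factorial : k))⁻¹ * ((((m - s).factorial : k))⁻¹ * (-1 : k) ^ (m - s))) = 0 := by
        have hc1 : ∀ s ∈ range (m + 1),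
            ((s.factorial : k))⁻¹ * ((((m - s).factorial : k))⁻¹ * (-1 : k) ^ (m - s))
            = ((m.factorial : k))⁻¹ * ((-1 : k) ^ (m - s) * (m.choose s : k)) := by
          intro s hs
          simp only [Finset.mem_range] at hs
          have hfc := fact_inv_choose (k := k) (show s ≤ m by omega)
          linear_combination (-((-1 : k) ^ (m - s))) * hfc
        rw [Finset.sum_congr rfl hc1, ← Finset.mul_sum]
        have halt : (∑ s ∈ range (m + 1), (-1 : k) ^ (m - s) * (m.choose s : k)) = 0 := by
          have hrefl := Finset.sum_range_reflect
            (fun s => (-1 : k) ^ s * (m.choose s : k)) (m + 1)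
          have hz : (∑ s ∈ range (m + 1), (-1 : k) ^ s * (m.choose s : k)) = 0 := by
            have hint := Int.alternating_sum_range_choose_of_ne (n := m) (by omega)
            have : ((∑ i ∈ range (m + 1), (-1 : ℤ) ^ i * (m.choose i : ℤ) : ℤ) : k)
                = ∑ s ∈ range (m + 1), (-1 : k) ^ s * (m.choose s : k) := by
              push_cast
              rfl
            rw [← this, hint, Int.cast_zero]
          rw [← hz, ← hrefl]
          apply Finset.sum_congr rfl
          intro s hs
          simp only [Finset.mem_range] at hs
          have e1 : m + 1 - 1 - s = m - s := by omega
          rw [e1, Nat.choose_symm (by omega : s ≤ m)]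
        rw [halt, mul_zero]
      rw [hcoef, zero_smul]
  calc S.ssum _ = S.ssum (fun m => if m = 0 then (1 : U) else 0) := congrArg S.ssum (funext hm)
    _ = 1 := by
        unfold ssum
        have : (fun n => ∑ s ∈ range (n + 1), S.proj n (if s = 0 then (1 : U) else 0))
            = fun n => S.proj n 1 := by
          funext n
          rw [Finset.sum_eq_single_of_mem 0 (Finset.mem_range.mpr (by omega))]
          · simp
          · intro s _ hs
            simp [hs]
        rw [this, S.hsum_proj]

end ExpLemmas

end CGA

namespace CGA

variable {k U : Type*} [Field k] [Ring U] [Algebra k U]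

section ThetaYc

variable [CharZero k] (S : CGA k U)

lemma vge_zero' (x : U) : S.vge 0 x := fun p hp => absurd hp (Nat.not_lt_zero p)

/-- `Θ_b(x) = ∑ ad_b^m(x)/m!`, satisfying `e^b x = Θ_b(x) e^b`. -/
noncomputable def Theta (b x : U) : U :=
  S.ssum fun m => ((m.factorial : k))⁻¹ • (adE k b ^ m) x

lemma vge_Theta_term {b : U} (hb : S.proj 0 b = 0) (x : U) (m : ℕ) :
    S.vge m (((m.factorial : k))⁻¹ • (adE k b ^ m) x) := by
  apply S.vge_smul
  have := S.vge_adE_pow hb (S.vge_zero' x) m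
  simpa using this

lemma expS_mul (b x : U) (hb : S.proj 0 b = 0) :
    S.expS b * x = S.Theta b x * S.expS b := by
  unfold expS Theta
  rw [S.ssum_mul _ (fun s => S.vge_expS_term hb s) x,
    S.ssum_mul_ssum _ _ (fun m => S.vge_Theta_term hb x m) (fun t => S.vge_expS_term hb t)]
  congr 1
  funext s
  rw [smul_mul_assoc, mulLeft_pow_expand k b x s, Finset.smul_sum]
  apply Finset.sum_congr rfl
  intro i hi
  simp only [Finset.mem_range] at hi
  rw [smul_mul_smul_comm, ← Nat.cast_smul_eq_nsmul k, smul_smul,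
    fact_inv_choose (show i ≤ s by omega)]

/-- terms of the series `Y_c = ∑_{m ≥ 1} ad_c^{m-1}(δ c)/m!`. -/
noncomputable def Ycterm (c : U) : ℕ → U
  | 0 => 0
  | (a + 1) => (((a + 1).factorial : k))⁻¹ • (adE k c ^ a) (S.delta c)

/-- `Y_c = (δ e^c)·e^{-c}` as a series of iterated brackets. -/
noncomputable def Yc (c : U) : U := S.ssum (S.Ycterm c)

lemma vge_delta (c : U) : S.vge 1 (S.delta c) := by
  apply S.vge_one
  rw [S.proj_delta]
  simp

lemma vge_Ycterm {c : U} (hc : S.proj 0 c = 0) (m : ℕ) : S.vge m (S.Ycterm c m) := by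
  cases m with
  | zero => exact S.vge_zero_arg 0
  | succ a =>
    show S.vge (a + 1) ((((a + 1).factorial : k))⁻¹ • (adE k c ^ a) (S.delta c))
    apply S.vge_smul
    have := S.vge_adE_pow hc (S.vge_delta c) a
    simpa [Nat.add_comm] using this

lemma delta_expS (c : U) (hc : S.proj 0 c = 0) :
    S.delta (S.expS c) = S.Yc c * S.expS c := by
  unfold expS Yc
  rw [S.map_ssum S.delta S.delta_proj,
    S.ssum_mul_ssum _ _ (fun m => S.vge_Ycterm hc m) (fun t => S.vge_expS_term hc t)]
  congr 1
  funext s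
  rw [map_smul, S.delta_pow, sum_pow_expand k c (S.delta c) s, Finset.smul_sum,
    Finset.sum_range_succ']
  have h0 : S.Ycterm c 0 * (((s - 0).factorial : k))⁻¹ • c ^ (s - 0) = 0 := by
    show (0 : U) * _ = 0
    rw [zero_mul]
  rw [h0, add_zero]
  apply Finset.sum_congr rfl
  intro a ha
  simp only [Finset.mem_range] at ha
  show (s.factorial : k)⁻¹ • (s.choose (a + 1) • ((adE k c ^ a) (S.delta c) * c ^ (s - 1 - a)))
      = ((((a + 1).factorial : k))⁻¹ • (adE k c ^ a) (S.delta c))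
        * (((s - (a + 1)).factorial : k))⁻¹ • c ^ (s - (a + 1))
  rw [smul_mul_smul_comm, ← Nat.cast_smul_eq_nsmul k, smul_smul,
    fact_inv_choose (show a + 1 ≤ s by omega)]
  have he : s - (a + 1) = s - 1 - a := by omega
  rw [he]

end ThetaYc

section Lmem

variable (S : CGA k U)

/-- all homogeneous components lie in `L` -/
def Lmem (x : U) : Prop := ∀ n, S.proj n x ∈ S.L

lemma Lmem_of_mem {x : U} (hx : x ∈ S.L) : S.Lmem x := fun n => S.L_graded n x hx

lemma proj_zero_of_Lmem {x : U} (hx : S.Lmem x) : S.proj 0 x = 0 := by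
  have h := S.L_pos _ (hx 0)
  rwa [S.proj_proj_self] at h

lemma Lmem_add {x y : U} (hx : S.Lmem x) (hy : S.Lmem y) : S.Lmem (x + y) := fun n => by
  rw [map_add]; exact Submodule.add_mem _ (hx n) (hy n)

lemma Lmem_smul (α : k) {x : U} (hx : S.Lmem x) : S.Lmem (α • x) := fun n => by
  rw [map_smul]; exact Submodule.smul_mem _ α (hx n)

lemma Lmem_adE {c : U} (hc : c ∈ S.L) {x : U} (hx : S.Lmem x) : S.Lmem (adE k c x) := by
  intro n
  have hrepr : adE k c x = c * x - x * c := rfl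
  have h2 : ∑ p ∈ range (n + 1), S.proj p x * S.proj (n - p) c
      = ∑ p ∈ range (n + 1), S.proj (n - p) x * S.proj p c := by
    rw [← Finset.sum_range_reflect (fun p => S.proj (n - p) x * S.proj p c) (n + 1)]
    apply Finset.sum_congr rfl
    intro p hp
    simp only [Finset.mem_range] at hp
    have e1 : n + 1 - 1 - p = n - p := by omega
    have e2 : n - (n - p) = p := by omega
    rw [e1, e2]
  rw [hrepr, map_sub, S.proj_mul, S.proj_mul, h2, ← Finset.sum_sub_distrib]
  apply Submodule.sum_mem
  intro p hp
  exact S.L_bracket _ (S.L_graded p _ hc) _ (hx (n - p))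

lemma Lmem_adE_pow {c : U} (hc : c ∈ S.L) {x : U} (hx : S.Lmem x) (m : ℕ) :
    S.Lmem ((adE k c ^ m) x) := by
  induction m with
  | zero => simpa using hx
  | succ m ih =>
    have : (adE k c ^ (m + 1)) x = adE k c ((adE k c ^ m) x) := by
      rw [pow_succ', Module.End.mul_apply]
    rw [this]
    exact S.Lmem_adE hc ih

lemma Lmem_delta {c : U} (hc : c ∈ S.L) : S.Lmem (S.delta c) := fun n => by
  rw [S.proj_delta]
  exact Submodule.smul_mem _ _ (S.L_graded n c hc)

lemma Lmem_ssum {y : ℕ → U} (hy : ∀ s, S.Lmem (y s)) : S.Lmem (S.ssum y) := fun n => by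
  rw [S.proj_ssum]
  exact Submodule.sum_mem _ fun s _ => hy s n

lemma Lmem_Yc {c : U} (hc : c ∈ S.L) : S.Lmem (S.Yc c) := by
  apply S.Lmem_ssum
  intro s
  cases s with
  | zero => intro n; rw [show S.Ycterm c 0 = 0 from rfl, map_zero]; exact Submodule.zero_mem _
  | succ a =>
    show S.Lmem ((((a + 1).factorial : k))⁻¹ • (adE k c ^ a) (S.delta c))
    exact S.Lmem_smul _ (S.Lmem_adE_pow hc (S.Lmem_delta hc) a)

lemma Lmem_Theta {b : U} (hb : b ∈ S.L) {x : U} (hx : S.Lmem x) : S.Lmem (S.Theta b x) := by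
  apply S.Lmem_ssum
  intro m
  exact S.Lmem_smul _ (S.Lmem_adE_pow hb hx m)

end Lmem

end CGA

namespace CGA

variable {k U : Type*} [Field k] [Ring U] [Algebra k U]

lemma d_delta_comm (S : CGA k U) {d : U →ₗ[k] U} (hd : S.IsGradedDerivation d) (x : U) :
    d (S.delta x) = S.delta (d x) :=
  S.ext_proj fun n => by
    rw [← hd.graded n (S.delta x), S.proj_delta, map_smul, hd.graded, ← S.proj_delta]

lemma d_one (S : CGA k U) {d : U →ₗ[k] U} (hd : S.IsGradedDerivation d) : d (1 : U) = 0 := by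
  have h := hd.leibniz 1 1
  rw [mul_one, mul_one, one_mul] at h
  have h2 : d 1 + d 1 = d 1 + 0 := by rw [add_zero]; exact h.symm
  exact add_left_cancel h2

end CGA


/-- assume `L = ker_L d ⊕ d(L)`.  If `u ∈ L` is
`d`-conjugate to `0`, then `0` is its unique `d`-normal form: the only
`v ∈ ker_L d` which is `d`-conjugate to `u` is `v = 0`. -/
theorem zero_unique_normal_form {k U : Type*} [Field k] [CharZero k] [Ring U]
    [Algebra k U] (S : CGA k U) (d : U →ₗ[k] U)
    (hd : S.IsGradedDerivation d)
    (hdec₁ : ∀ x ∈ S.L, ∃ a ∈ S.L, d a = 0 ∧ ∃ y ∈ S.L, x = a + d y)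
    (hdec₂ : ∀ a ∈ S.L, d a = 0 → (∃ y ∈ S.L, a = d y) → a = 0)
    (u : U) (hu : u ∈ S.L) (h0 : S.dConj d u 0) :
    ∀ v ∈ S.L, d v = 0 → S.dConj d u v → v = 0 := by
  intro v hv hdv hconj
  obtain ⟨φ, ⟨a, haL, rfl⟩, hφeq⟩ := h0
  obtain ⟨ψ, ⟨b, hbL, rfl⟩, hψeq⟩ := hconj
  rw [zero_mul, add_zero] at hφeq
  -- basic facts
  have ha0 : S.proj 0 a = 0 := S.L_pos a haL
  have hb0 : S.proj 0 b = 0 := S.L_pos b hbL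
  have hna0 : S.proj 0 (-a) = 0 := by rw [map_neg, ha0, neg_zero]
  have hnb0 : S.proj 0 (-b) = 0 := by rw [map_neg, hb0, neg_zero]
  have hφΦ : S.expS a * S.expS (-a) = 1 := S.expS_mul_expS_neg ha0
  have hΦφ : S.expS (-a) * S.expS a = 1 := by
    have h := S.expS_mul_expS_neg hna0
    rwa [neg_neg] at h
  have hψΨ : S.expS b * S.expS (-b) = 1 := S.expS_mul_expS_neg hb0
  -- derivative of the inverse of φ
  have hdΦ : d (S.expS (-a)) = -(u * S.expS (-a)) := by
    have h3 : d (S.expS (-a)) * S.expS a + S.expS (-a) * d (S.expS a) = 0 := by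
      rw [← hd.leibniz, hΦφ, S.d_one hd]
    rw [hφeq, ← mul_assoc, hΦφ, one_mul] at h3
    have h4 : d (S.expS (-a)) * S.expS a = -u := eq_neg_of_add_eq_zero_left h3
    calc d (S.expS (-a)) = d (S.expS (-a)) * (S.expS a * S.expS (-a)) := by
          rw [hφΦ, mul_one]
      _ = (d (S.expS (-a)) * S.expS a) * S.expS (-a) := by rw [mul_assoc]
      _ = -u * S.expS (-a) := by rw [h4]
      _ = -(u * S.expS (-a)) := by rw [neg_mul]
  -- the element χ = ψ · φ⁻¹ and its equations
  have hdψ : d (S.expS b) = S.expS b * u - v * S.expS b := eq_sub_of_add_eq hψeq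
  have hdχ : d (S.expS b * S.expS (-a)) = -(v * (S.expS b * S.expS (-a))) := by
    rw [hd.leibniz, hdψ, hdΦ, sub_mul, mul_neg, mul_assoc, ← mul_assoc v]
    abel
  have hχ0 : S.proj 0 (S.expS b * S.expS (-a)) = 1 := by
    rw [S.proj_mul, Finset.sum_range_one, Nat.sub_self, S.proj_expS_zero, S.proj_expS_zero,
      mul_one]
  -- the Euler logarithmic derivative Z with components in L
  have hδχ : S.delta (S.expS b * S.expS (-a))
      = (S.Yc b + S.Theta b (S.Yc (-a))) * (S.expS b * S.expS (-a)) := by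
    rw [S.delta_mul, S.delta_expS b hb0, S.delta_expS (-a) hna0]
    have hM : S.expS b * S.Yc (-a) = S.Theta b (S.Yc (-a)) * S.expS b :=
      S.expS_mul b (S.Yc (-a)) hb0
    rw [add_mul]
    congr 1
    · rw [mul_assoc]
    · rw [← mul_assoc, hM, mul_assoc]
  have hZL : S.Lmem (S.Yc b + S.Theta b (S.Yc (-a))) :=
    S.Lmem_add (S.Lmem_Yc hbL) (S.Lmem_Theta hbL (S.Lmem_Yc (Submodule.neg_mem _ haL)))
  have hZ0 : S.proj 0 (S.Yc b + S.Theta b (S.Yc (-a))) = 0 := S.proj_zero_of_Lmem hZL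
  -- dZ equation
  have hχinv : (S.expS b * S.expS (-a)) * (S.expS a * S.expS (-b)) = 1 := by
    have h5 : (S.expS b * S.expS (-a)) * (S.expS a * S.expS (-b))
        = S.expS b * ((S.expS (-a) * S.expS a) * S.expS (-b)) := by
      rw [mul_assoc, ← mul_assoc (S.expS (-a))]
    rw [h5, hΦφ, one_mul, hψΨ]
  have hcancel : ∀ w₁ w₂ : U,
      w₁ * (S.expS b * S.expS (-a)) = w₂ * (S.expS b * S.expS (-a)) → w₁ = w₂ := by
    intro w₁ w₂ h
    calc w₁ = w₁ * ((S.expS b * S.expS (-a)) * (S.expS a * S.expS (-b))) := by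
          rw [hχinv, mul_one]
      _ = (w₁ * (S.expS b * S.expS (-a))) * (S.expS a * S.expS (-b)) := (mul_assoc _ _ _).symm
      _ = (w₂ * (S.expS b * S.expS (-a))) * (S.expS a * S.expS (-b)) := by rw [h]
      _ = w₂ * ((S.expS b * S.expS (-a)) * (S.expS a * S.expS (-b))) := mul_assoc _ _ _
      _ = w₂ := by rw [hχinv, mul_one]
  have hdZ : d (S.Yc b + S.Theta b (S.Yc (-a)))
      = -(S.delta v) - v * (S.Yc b + S.Theta b (S.Yc (-a)))
        + (S.Yc b + S.Theta b (S.Yc (-a))) * v := by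
    apply hcancel
    have e1 : d ((S.Yc b + S.Theta b (S.Yc (-a))) * (S.expS b * S.expS (-a)))
        = d (S.Yc b + S.Theta b (S.Yc (-a))) * (S.expS b * S.expS (-a))
          + (S.Yc b + S.Theta b (S.Yc (-a))) * d (S.expS b * S.expS (-a)) :=
      hd.leibniz _ _
    have e2 : d ((S.Yc b + S.Theta b (S.Yc (-a))) * (S.expS b * S.expS (-a)))
        = S.delta (d (S.expS b * S.expS (-a))) := by
      rw [← hδχ, S.d_delta_comm hd]
    have e3 : d (S.Yc b + S.Theta b (S.Yc (-a))) * (S.expS b * S.expS (-a))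
        = -(S.delta v * (S.expS b * S.expS (-a))
            + v * ((S.Yc b + S.Theta b (S.Yc (-a))) * (S.expS b * S.expS (-a))))
          + (S.Yc b + S.Theta b (S.Yc (-a))) * (v * (S.expS b * S.expS (-a))) := by
      have e4 : d (S.Yc b + S.Theta b (S.Yc (-a))) * (S.expS b * S.expS (-a))
          = d ((S.Yc b + S.Theta b (S.Yc (-a))) * (S.expS b * S.expS (-a)))
            - (S.Yc b + S.Theta b (S.Yc (-a))) * d (S.expS b * S.expS (-a)) := by
        rw [e1]; abel
      rw [e4, e2, hdχ, map_neg, S.delta_mul, hδχ, mul_neg]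
      abel
    rw [e3]
    noncomm_ring
  -- main induction
  have hv0 : S.proj 0 v = 0 := S.L_pos v hv
  have key : ∀ n, S.proj n v = 0 := by
    intro n
    induction n using Nat.strong_induction_on with
    | _ n ih =>
    rcases Nat.eq_zero_or_pos n with rfl | hn
    · exact hv0
    have hproj_vmul : ∀ (w : U) (p : ℕ), p < n → S.proj p (v * w) = 0 := by
      intro w p hp
      rw [S.proj_mul]
      apply Finset.sum_eq_zero
      intro i hi
      simp only [Finset.mem_range] at hi
      rw [ih i (by omega), zero_mul]
    have hproj_mulv : ∀ (w : U) (p : ℕ), p < n → S.proj p (w * v) = 0 := by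
      intro w p hp
      rw [S.proj_mul]
      apply Finset.sum_eq_zero
      intro i hi
      simp only [Finset.mem_range] at hi
      rw [ih (p - i) (by omega), mul_zero]
    have hdχp : ∀ p < n, d (S.proj p (S.expS b * S.expS (-a))) = 0 := by
      intro p hp
      rw [hd.graded, hdχ, map_neg, hproj_vmul _ p hp, neg_zero]
    have hdZp : ∀ p < n, d (S.proj p (S.Yc b + S.Theta b (S.Yc (-a)))) = 0 := by
      intro p hp
      rw [hd.graded, hdZ]
      simp only [map_add, map_sub, map_neg]
      rw [S.proj_delta, ih p hp, smul_zero, hproj_vmul _ p hp, hproj_mulv _ p hp]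
      simp
    have hdχn : d (S.proj n (S.expS b * S.expS (-a))) = -(S.proj n v) := by
      rw [hd.graded, hdχ, map_neg, S.proj_mul]
      congr 1
      rw [Finset.sum_eq_single_of_mem n (Finset.self_mem_range_succ n)]
      · rw [Nat.sub_self, hχ0, mul_one]
      · intro i hi hin
        simp only [Finset.mem_range] at hi
        rw [ih i (by omega), zero_mul]
    have hrec : (n : k) • S.proj n (S.expS b * S.expS (-a))
        = ∑ p ∈ range (n + 1), S.proj p (S.Yc b + S.Theta b (S.Yc (-a)))
            * S.proj (n - p) (S.expS b * S.expS (-a)) := by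
      rw [← S.proj_delta, hδχ, S.proj_mul]
    have hdsum : d ((n : k) • S.proj n (S.expS b * S.expS (-a)))
        = d (S.proj n (S.Yc b + S.Theta b (S.Yc (-a)))) := by
      rw [hrec, map_sum, Finset.sum_eq_single_of_mem n (Finset.self_mem_range_succ n)]
      · rw [Nat.sub_self, hd.leibniz, hdχp 0 hn, mul_zero, add_zero, hχ0, mul_one]
      · intro p hp hpn
        simp only [Finset.mem_range] at hp
        rcases Nat.eq_zero_or_pos p with rfl | hp0
        · rw [hZ0, zero_mul, map_zero]
        · rw [hd.leibniz, hdZp p (by omega), zero_mul, hdχp (n - p) (by omega), mul_zero,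
            add_zero]
    have hnne : (n : k) ≠ 0 := Nat.cast_ne_zero.mpr (by omega)
    have hfin : (n : k) • -(S.proj n v) = d (S.proj n (S.Yc b + S.Theta b (S.Yc (-a)))) := by
      rw [← hdχn, ← map_smul, hdsum]
    have hyL : -((n : k))⁻¹ • S.proj n (S.Yc b + S.Theta b (S.Yc (-a))) ∈ S.L :=
      Submodule.smul_mem _ _ (hZL n)
    have hdy : d (-((n : k))⁻¹ • S.proj n (S.Yc b + S.Theta b (S.Yc (-a)))) = S.proj n v := by
      rw [map_smul, ← hfin, smul_smul, neg_mul, inv_mul_cancel₀ hnne, neg_smul, one_smul,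
        neg_neg]
    apply hdec₂ (S.proj n v) (S.L_graded n v hv)
    · rw [hd.graded, hdv, map_zero]
    · exact ⟨_, hyL, hdy.symm⟩
  apply S.ext_proj
  intro n
  rw [key n, map_zero]
end

section
/- Let d and δ be graded derivations on L = L^k such that L = ker_L d ⊕ d(L), ker_L d is stable under δ, and the restriction of δ to ker_L d is invertible. Let A^- = ε^{-1}k[ε^{-1}]. If ψ ∈ G^{A^-} satisfies log_{d+εδ}(ψ) = ψ^{-1}·(d + εδ)(ψ) ∈ L^k (i.e. the logarithmic derivative is independent of ε and has no poles), then ψ ∈ exp(ker_{L^{A^-}} d), i.e. ψ = exp(α) with α ∈ L^{A^-} and d(α) = 0. -/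
/-!
Common setting: a complete graded Lie algebra `L` over a field `k` of
characteristic zero, sitting (as the Lie algebra of primitive elements)
inside its completed universal enveloping algebra `U = ∏_{n ≥ 0} U_n`.

We model the completed graded algebra `U` abstractly: `proj n` is the
projection onto the degree-`n` homogeneous component, and `hsum`
reconstructs an element from a family of homogeneous components
(this expresses the completeness `U = ∏_n U_n`).
-/

open Finset

/-!
The extension of scalars `L^𝓐 ⊆ U^𝓐` by the algebra `𝓐 = k[[ε]][ε⁻¹]` of
Laurent series.  We model `V = U^𝓐` as a second completed graded algebra
(with its complete graded Lie algebra `L^𝓐` of primitive elements), together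
with: the inclusion `ι : U → V`; multiplication `eps` by `ε` (a bijective
`A`-linearity operator, with inverse `epsInv`); extraction `coeff m` of the
coefficient of `ε^m` (an element of `U`, with, in each degree, only finitely
many coefficients of negative index — poles of finite order); and an ε-adic
summation operator `easum` for series which are coefficientwise (in `ε`) and
degreewise finite.
-/
structure LExt (k U V : Type*) [Field k] [Ring U] [Algebra k U] [Ring V]
    [Algebra k V] (S : CGA k U) extends CGA k V where
  /-- the inclusion `U = U^k ⊆ U^𝓐` -/
  ι : U →ₐ[k] V
  ι_proj : ∀ (n : ℕ) (x : U), ι (S.proj n x) = proj n (ι x)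
  ι_L : ∀ x ∈ S.L, ι x ∈ L
  /-- multiplication by `ε` -/
  eps : V →ₗ[k] V
  /-- multiplication by `ε⁻¹` -/
  epsInv : V →ₗ[k] V
  eps_epsInv : ∀ x, eps (epsInv x) = x
  epsInv_eps : ∀ x, epsInv (eps x) = x
  eps_mul_left : ∀ x y : V, eps (x * y) = eps x * y
  eps_mul_right : ∀ x y : V, eps (x * y) = x * eps y
  eps_proj : ∀ (n : ℕ) (x : V), eps (proj n x) = proj n (eps x)
  eps_L : ∀ x ∈ L, eps x ∈ L
  epsInv_L : ∀ x ∈ L, epsInv x ∈ L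
  /-- the coefficient of `ε^m` -/
  coeff : ℤ → V →ₗ[k] U
  coeff_ι : ∀ (m : ℤ) (x : U), coeff m (ι x) = if m = 0 then x else 0
  coeff_eps : ∀ (m : ℤ) (x : V), coeff m (eps x) = coeff (m - 1) x
  coeff_proj : ∀ (m : ℤ) (n : ℕ) (x : V), coeff m (proj n x) = S.proj n (coeff m x)
  coeff_ext : ∀ x y : V, (∀ m, coeff m x = coeff m y) → x = y
  /-- in each degree, poles have finite order -/
  coeff_bdd : ∀ (x : V) (n : ℕ), ∃ M : ℤ, ∀ m < M, S.proj n (coeff m x) = 0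
  /-- `L^𝓐` consists exactly of the elements all of whose `ε`-coefficients
  lie in `L` -/
  coeff_L : ∀ x ∈ L, ∀ m : ℤ, coeff m x ∈ S.L
  mem_L_of_coeff : ∀ x : V, (∀ m : ℤ, coeff m x ∈ S.L) → x ∈ L
  /-- ε-adic summation -/
  easum : (ℕ → V) → V
  easum_coeff : ∀ (y : ℕ → V) (m : ℤ) (n : ℕ) (K : ℕ),
    (∀ j, K ≤ j → S.proj n (coeff m (y j)) = 0) →
    S.proj n (coeff m (easum y)) =
      ∑ j ∈ Finset.range K, S.proj n (coeff m (y j))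

namespace LExt

variable {k U V : Type*} [Field k] [Ring U] [Algebra k U] [Ring V]
  [Algebra k V] {S : CGA k U}

/-- membership in the `𝓐⁺ = k[[ε]]` part -/
def memPlus (T : LExt k U V S) (x : V) : Prop :=
  ∀ m : ℤ, m < 0 → T.coeff m x = 0

/-- membership in the `𝓐⁻ = ε⁻¹k[ε⁻¹]` part -/
def memMinus (T : LExt k U V S) (x : V) : Prop :=
  ∀ m : ℤ, 0 ≤ m → T.coeff m x = 0

end LExt

section AuxCGA

variable {k U : Type*} [Field k] [Ring U] [Algebra k U]

namespace CGA

lemma hsum_zero (S : CGA k U) : S.hsum (fun _ => (0 : U)) = 0 := by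
  have h := S.hsum_proj 0
  simpa using h

lemma ext_zero (S : CGA k U) (x : U) (h : ∀ n, S.proj n x = 0) : x = 0 := by
  have h2 := S.hsum_proj x
  rw [show (fun n => S.proj n x) = fun _ => (0 : U) from funext h, S.hsum_zero] at h2
  exact h2.symm

lemma ext_eq (S : CGA k U) (x y : U) (h : ∀ n, S.proj n x = S.proj n y) : x = y := by
  have : x - y = 0 := S.ext_zero _ (fun n => by rw [map_sub, h, sub_self])
  exact sub_eq_zero.mp this

lemma ssum_proj' (S : CGA k U) (y : ℕ → U) (n : ℕ) :
    S.proj n (S.ssum y) = ∑ s ∈ Finset.range (n + 1), S.proj n (y s) := by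
  apply S.proj_hsum
  intro q
  rw [map_sum]
  exact Finset.sum_congr rfl fun s _ => by rw [S.proj_proj, if_pos rfl]

lemma proj_pow_eq_zero (S : CGA k U) (x : U) (h : S.proj 0 x = 0) :
    ∀ s n, n < s → S.proj n (x ^ s) = 0 := by
  intro s
  induction s with
  | zero => intro n hn; omega
  | succ t ih =>
    intro n hn
    rw [pow_succ', S.proj_mul]
    apply Finset.sum_eq_zero
    intro p hp
    have hp' := Finset.mem_range.mp hp
    rcases Nat.eq_zero_or_pos p with h0 | h0
    · subst h0; rw [h, zero_mul]
    · rw [ih (n - p) (by omega), mul_zero]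

end CGA

end AuxCGA
section AuxLExt

variable {k U V : Type*} [Field k] [Ring U] [Algebra k U] [Ring V] [Algebra k V]
  {S : CGA k U}

namespace LExt

/-- degree-`n`, `ε^m` component -/
def co (T : LExt k U V S) (n : ℕ) (m : ℤ) (x : V) : U := S.proj n (T.coeff m x)

lemma co_proj (T : LExt k U V S) (n : ℕ) (m : ℤ) (x : V) :
    T.co n m x = T.coeff m (T.toCGA.proj n x) := (T.coeff_proj m n x).symm

/-- multiplication by `ε^j`, `j : ℤ` -/
def epsZ (T : LExt k U V S) (j : ℤ) (v : V) : V :=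
  (⇑T.eps)^[j.toNat] ((⇑T.epsInv)^[(-j).toNat] v)

lemma coeff_eps_iter (T : LExt k U V S) (s : ℕ) (m : ℤ) (v : V) :
    T.coeff m ((⇑T.eps)^[s] v) = T.coeff (m - s) v := by
  induction s generalizing m with
  | zero => simp
  | succ t ih =>
    rw [Function.iterate_succ_apply', T.coeff_eps, ih]
    have h : m - 1 - (t : ℤ) = m - ((t + 1 : ℕ) : ℤ) := by push_cast; ring
    rw [h]

lemma coeff_epsInv (T : LExt k U V S) (m : ℤ) (v : V) :
    T.coeff m (T.epsInv v) = T.coeff (m + 1) v := by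
  have h := T.coeff_eps (m + 1) (T.epsInv v)
  rw [T.eps_epsInv] at h
  simpa using h.symm

lemma coeff_epsInv_iter (T : LExt k U V S) (s : ℕ) (m : ℤ) (v : V) :
    T.coeff m ((⇑T.epsInv)^[s] v) = T.coeff (m + s) v := by
  induction s generalizing m with
  | zero => simp
  | succ t ih =>
    rw [Function.iterate_succ_apply', T.coeff_epsInv, ih]
    have h : m + 1 + (t : ℤ) = m + ((t + 1 : ℕ) : ℤ) := by push_cast; ring
    rw [h]

lemma coeff_epsZ (T : LExt k U V S) (j m : ℤ) (v : V) :
    T.coeff m (T.epsZ j v) = T.coeff (m - j) v := by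
  rw [epsZ, coeff_eps_iter, coeff_epsInv_iter]
  have h : m - (j.toNat : ℤ) + ((-j).toNat : ℤ) = m - j := by omega
  rw [h]

lemma epsInv_mul_left (T : LExt k U V S) (v w : V) :
    T.epsInv v * w = T.epsInv (v * w) := by
  have h := congrArg T.epsInv (T.eps_mul_left (T.epsInv v) w)
  rwa [T.epsInv_eps, T.eps_epsInv] at h

lemma epsInv_mul_right (T : LExt k U V S) (v w : V) :
    v * T.epsInv w = T.epsInv (v * w) := by
  have h := congrArg T.epsInv (T.eps_mul_right v (T.epsInv w))
  rwa [T.epsInv_eps, T.eps_epsInv] at h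

lemma epsZ_mul_left (T : LExt k U V S) (j : ℤ) (v w : V) :
    T.epsZ j v * w = T.epsZ j (v * w) := by
  rw [epsZ, epsZ]
  generalize j.toNat = a
  generalize (-j).toNat = b
  induction a with
  | zero =>
    simp only [Function.iterate_zero_apply]
    induction b with
    | zero => simp
    | succ t ih => rw [Function.iterate_succ_apply', Function.iterate_succ_apply',
        T.epsInv_mul_left, ih]
  | succ t ih => rw [Function.iterate_succ_apply', Function.iterate_succ_apply',
      ← T.eps_mul_left, ih]

lemma epsZ_mul_right (T : LExt k U V S) (j : ℤ) (v w : V) :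
    v * T.epsZ j w = T.epsZ j (v * w) := by
  rw [epsZ, epsZ]
  generalize j.toNat = a
  generalize (-j).toNat = b
  induction a with
  | zero =>
    simp only [Function.iterate_zero_apply]
    induction b with
    | zero => simp
    | succ t ih => rw [Function.iterate_succ_apply', Function.iterate_succ_apply',
        T.epsInv_mul_right, ih]
  | succ t ih => rw [Function.iterate_succ_apply', Function.iterate_succ_apply',
      ← T.eps_mul_right, ih]

lemma co_iota (T : LExt k U V S) (n : ℕ) (m : ℤ) (u : U) :
    T.co n m (T.ι u) = if m = 0 then S.proj n u else 0 := by
  rw [co, T.coeff_ι]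
  split <;> simp

/-- finite `ε`-expansion of a homogeneous component -/
lemma rep (T : LExt k U V S) (x : V) (n : ℕ) (M N : ℤ)
    (hb : ∀ m, m < M ∨ N < m → T.co n m x = 0) :
    T.toCGA.proj n x = ∑ m ∈ Finset.Icc M N, T.epsZ m (T.ι (T.co n m x)) := by
  apply T.coeff_ext
  intro i
  rw [map_sum, ← co_proj]
  have : ∀ m ∈ Finset.Icc M N,
      T.coeff i (T.epsZ m (T.ι (T.co n m x))) = if i = m then T.co n m x else 0 := by
    intro m _
    rw [coeff_epsZ, T.coeff_ι]
    by_cases h : i = m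
    · rw [if_pos (by omega), if_pos h]
    · rw [if_neg (by omega), if_neg h]
  rw [Finset.sum_congr rfl this, Finset.sum_ite_eq]
  by_cases hi : i ∈ Finset.Icc M N
  · rw [if_pos hi]
  · rw [if_neg hi]
    exact hb i (by rw [Finset.mem_Icc] at hi; omega)

end LExt

end AuxLExt
section AuxInv

variable {k U : Type*} [Field k] [Ring U] [Algebra k U]

namespace CGA

lemma mul_inv1 (S : CGA k U) (φ : U) (h : S.proj 0 φ = 1) : φ * S.inv1 φ = 1 := by
  apply S.ext_eq
  intro n
  have hu0 : S.proj 0 (1 - φ) = 0 := by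
    rw [map_sub, S.proj_one, if_pos rfl, h, sub_self]
  have hval := S.proj_pow_eq_zero _ hu0
  have hg : ∀ q : ℕ, S.proj q (S.inv1 φ) = ∑ s ∈ Finset.range (q+1), S.proj q ((1-φ)^s) :=
    fun q => S.ssum_proj' _ q
  rw [S.proj_mul]
  have hφ : ∀ p, S.proj p φ = S.proj p 1 - S.proj p (1 - φ) := fun p => by
    rw [map_sub, sub_sub_cancel]
  have step1 : ∑ p ∈ Finset.range (n+1), S.proj p φ * S.proj (n-p) (S.inv1 φ)
      = (∑ p ∈ Finset.range (n+1), S.proj p 1 * S.proj (n-p) (S.inv1 φ))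
        - ∑ p ∈ Finset.range (n+1), S.proj p (1-φ) * S.proj (n-p) (S.inv1 φ) := by
    rw [← Finset.sum_sub_distrib]
    refine Finset.sum_congr rfl fun p _ => ?_
    rw [hφ p, sub_mul]
  have step2 : ∑ p ∈ Finset.range (n+1), S.proj p 1 * S.proj (n-p) (S.inv1 φ)
      = S.proj n (S.inv1 φ) := by
    rw [Finset.sum_eq_single_of_mem 0 (Finset.mem_range.mpr (by omega))]
    · rw [S.proj_one, if_pos rfl, one_mul, Nat.sub_zero]
    · intro p _ hp
      rw [S.proj_one, if_neg hp, zero_mul]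
  have step3 : ∑ p ∈ Finset.range (n+1), S.proj p (1-φ) * S.proj (n-p) (S.inv1 φ)
      = S.proj n (S.inv1 φ) - S.proj n 1 := by
    have hext : ∀ p ∈ Finset.range (n+1),
        S.proj p (1-φ) * S.proj (n-p) (S.inv1 φ)
        = ∑ s ∈ Finset.range (n+1), S.proj p (1-φ) * S.proj (n-p) ((1-φ)^s) := by
      intro p hp
      rw [hg (n-p), Finset.mul_sum]
      apply Finset.sum_subset
      · exact Finset.range_subset_range.mpr (by omega)
      · intro s hs hns
        rw [hval s (n-p) (by simp only [Finset.mem_range] at hs hns ⊢; omega), mul_zero]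
    rw [Finset.sum_congr rfl hext, Finset.sum_comm]
    have hrec : ∀ s, ∑ p ∈ Finset.range (n+1), S.proj p (1-φ) * S.proj (n-p) ((1-φ)^s)
        = S.proj n ((1-φ)^(s+1)) := by
      intro s
      rw [pow_succ', S.proj_mul]
    rw [Finset.sum_congr rfl (fun s _ => hrec s)]
    have h4 : ∑ s ∈ Finset.range (n+2), S.proj n ((1-φ)^s)
        = (∑ s ∈ Finset.range (n+1), S.proj n ((1-φ)^(s+1))) + S.proj n ((1-φ)^0) :=
      Finset.sum_range_succ' _ (n+1)
    have h5 : ∑ s ∈ Finset.range (n+2), S.proj n ((1-φ)^s)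
        = ∑ s ∈ Finset.range (n+1), S.proj n ((1-φ)^s) := by
      rw [Finset.sum_range_succ, hval (n+1) n (by omega), add_zero]
    rw [← hg n] at h5
    rw [pow_zero] at h4
    rw [h5] at h4
    rw [eq_sub_iff_add_eq, h4.symm]
  rw [step1, step2, step3, sub_sub_cancel]
end CGA

end AuxInv
section AuxCore

variable {k U V : Type*} [Field k] [Ring U] [Algebra k U] [Ring V] [Algebra k V]
  {S : CGA k U}

namespace LExt

/-- degreewise boundedness of the `ε`-support -/
def Bd (T : LExt k U V S) (x : V) : Prop :=
  ∀ n : ℕ, ∃ M N : ℤ, ∀ m, m < M ∨ N < m → T.co n m x = 0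

lemma Bd.uniform {T : LExt k U V S} {x : V} (h : T.Bd x) (n : ℕ) :
    ∃ M N : ℤ, ∀ p ≤ n, ∀ m, m < M ∨ N < m → T.co p m x = 0 := by
  induction n with
  | zero =>
    obtain ⟨M, N, hb⟩ := h 0
    exact ⟨M, N, fun p hp m hm => by
      interval_cases p
      exact hb m hm⟩
  | succ t ih =>
    obtain ⟨M, N, hb⟩ := ih
    obtain ⟨M', N', hb'⟩ := h (t+1)
    refine ⟨min M M', max N N', fun p hp m hm => ?_⟩
    rcases Nat.lt_or_ge p (t+1) with hlt | hge
    · exact hb p (by omega) m (by omega)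
    · have : p = t + 1 := by omega
      subst this
      exact hb' m (by omega)

/-- The fundamental product formula for components. -/
lemma co_mul (T : LExt k U V S) (x y : V) (n : ℕ) (M N : ℤ)
    (hx : ∀ p ≤ n, ∀ j, j < M ∨ N < j → T.co p j x = 0)
    (M' N' : ℤ) (hy : ∀ p ≤ n, ∀ j, j < M' ∨ N' < j → T.co p j y = 0)
    (m : ℤ) :
    T.co n m (x * y) = ∑ p ∈ Finset.range (n+1), ∑ j ∈ Finset.Icc M N,
      T.co p j x * T.co (n-p) (m-j) y := by
  rw [co_proj, T.toCGA.proj_mul, map_sum]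
  refine Finset.sum_congr rfl fun p hp => ?_
  have hp' : p ≤ n := by simp only [Finset.mem_range] at hp; omega
  rw [T.rep x p M N (hx p hp'), T.rep y (n-p) M' N' (hy (n-p) (by omega)),
    Finset.sum_mul_sum, map_sum]
  refine Finset.sum_congr rfl fun j hj => ?_
  rw [map_sum]
  have hterm : ∀ i ∈ Finset.Icc M' N',
      T.coeff m (T.epsZ j (T.ι (T.co p j x)) * T.epsZ i (T.ι (T.co (n-p) i y)))
      = if m - j = i then T.co p j x * T.co (n-p) i y else 0 := by
    intro i _
    rw [epsZ_mul_left, epsZ_mul_right, ← map_mul, coeff_epsZ, coeff_epsZ, T.coeff_ι]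
    by_cases hc : m - j = i
    · rw [if_pos (by omega), if_pos hc]
    · rw [if_neg (by omega), if_neg hc]
  rw [Finset.sum_congr rfl hterm, Finset.sum_ite_eq]
  by_cases hmj : m - j ∈ Finset.Icc M' N'
  · rw [if_pos hmj]
  · rw [if_neg hmj]
    rw [hy (n-p) (by omega) (m-j) (by rw [Finset.mem_Icc] at hmj; omega), mul_zero]

lemma Bd_mul {T : LExt k U V S} {x y : V} (hx : T.Bd x) (hy : T.Bd y) : T.Bd (x * y) := by
  intro n
  obtain ⟨M, N, hbx⟩ := hx.uniform n
  obtain ⟨M', N', hby⟩ := hy.uniform n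
  refine ⟨M + M', N + N', fun m hm => ?_⟩
  rw [T.co_mul x y n M N hbx M' N' hby m]
  apply Finset.sum_eq_zero
  intro p hp
  apply Finset.sum_eq_zero
  intro j hj
  rw [Finset.mem_Icc] at hj
  rw [hby (n-p) (by omega) (m-j) (by omega), mul_zero]

lemma Bd_one (T : LExt k U V S) : T.Bd (1 : V) := by
  intro n
  refine ⟨0, 0, fun m hm => ?_⟩
  rw [show (1 : V) = T.ι 1 from (map_one T.ι).symm, co_iota, if_neg (by omega)]

lemma Bd_iota (T : LExt k U V S) (u : U) : T.Bd (T.ι u) := by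
  intro n
  refine ⟨0, 0, fun m hm => ?_⟩
  rw [co_iota, if_neg (by omega)]

end LExt

end AuxCore
section AuxAdjoin

variable {k U : Type*} [Field k] [Ring U] [Algebra k U]

lemma adjoin_ker_stable (d δ : U →ₗ[k] U)
    (hdl : ∀ x y : U, d (x*y) = d x * y + x * d y)
    (hδl : ∀ x y : U, δ (x*y) = δ x * y + x * δ y)
    (s : Set U) (hs : ∀ u ∈ s, d u = 0 ∧ d (δ u) = 0) :
    ∀ u ∈ Algebra.adjoin k s, d u = 0 ∧ d (δ u) = 0 := by
  have hd1 : d 1 = 0 := by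
    have h := hdl 1 1
    simp only [mul_one, one_mul] at h
    exact (left_eq_add.mp h)
  have hδ1 : δ (1 : U) = 0 := by
    have h := hδl 1 1
    simp only [mul_one, one_mul] at h
    exact (left_eq_add.mp h)
  intro u hu
  induction hu using Algebra.adjoin_induction with
  | mem x hx => exact hs x hx
  | algebraMap r =>
    rw [Algebra.algebraMap_eq_smul_one]
    constructor
    · rw [map_smul, hd1, smul_zero]
    · rw [map_smul, hδ1, smul_zero, map_zero]
  | add x y hx hy ihx ihy =>
    constructor
    · rw [map_add, ihx.1, ihy.1, add_zero]
    · rw [map_add, map_add, ihx.2, ihy.2, add_zero]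
  | mul x y hx hy ihx ihy =>
    constructor
    · rw [hdl, ihx.1, ihy.1, zero_mul, mul_zero, add_zero]
    · rw [hδl, map_add, hdl, hdl, ihx.1, ihy.1, ihx.2, ihy.2]
      simp

end AuxAdjoin
/-- Lemma `lemconst`, locality of the counter-term: with
`d, δ` as in the renormalization theorem, if `ψ ∈ G^{𝓐⁻}` (i.e.
`ψ = exp(α)` with `α ∈ L^{𝓐⁻}`) is such that
`log_{d+εδ}(ψ) = ψ⁻¹·(d+εδ)(ψ)` lies in `L^k` (no poles, no `ε`-dependence),
then `ψ ∈ exp(ker_{L^{𝓐⁻}} d)`: `ψ = exp(α)` for some `α ∈ L^{𝓐⁻}` with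
`d(α) = 0`. -/
theorem counterterm_in_exp_ker {k U V : Type*} [Field k] [CharZero k]
    [Ring U] [Algebra k U] [Ring V] [Algebra k V]
    (S : CGA k U) (T : LExt k U V S) (d δ : U →ₗ[k] U)
    (hd : S.IsGradedDerivation d) (hδ : S.IsGradedDerivation δ)
    (hdec₁ : ∀ x ∈ S.L, ∃ a ∈ S.L, d a = 0 ∧ ∃ y ∈ S.L, x = a + d y)
    (hdec₂ : ∀ a ∈ S.L, d a = 0 → (∃ y ∈ S.L, a = d y) → a = 0)
    (hker : ∀ x ∈ S.L, d x = 0 → d (δ x) = 0)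
    (hδkerinv : ∀ x ∈ S.L, d x = 0 →
      ((δ x = 0 → x = 0) ∧ ∃ y ∈ S.L, d y = 0 ∧ δ y = x))
    (Dv Δv : V →ₗ[k] V)
    (hDvder : T.toCGA.IsGradedDerivation Dv)
    (hΔvder : T.toCGA.IsGradedDerivation Δv)
    (hDv : ∀ (m : ℤ) (x : V), T.coeff m (Dv x) = d (T.coeff m x))
    (hΔv : ∀ (m : ℤ) (x : V), T.coeff m (Δv x) = δ (T.coeff m x))
    (ψ : V)
    -- `ψ ∈ G^{𝓐⁻}`
    (hψ : ∃ α : V, α ∈ T.toCGA.L ∧ T.memMinus α ∧ ψ = T.toCGA.expS α)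
    -- `log_{d+εδ}(ψ) ∈ L^k`
    (c : U) (hc : c ∈ S.L)
    (hlog : T.toCGA.inv1 ψ * (Dv ψ + T.eps (Δv ψ)) = T.ι c) :
    ∃ α : V, α ∈ T.toCGA.L ∧ T.memMinus α ∧ Dv α = 0 ∧
      ψ = T.toCGA.expS α := by

  classical
  obtain ⟨α, hαL, hαm, hψe⟩ := hψ
  subst hψe
  refine ⟨α, hαL, hαm, ?_, rfl⟩
  set ψ := T.toCGA.expS α with hψd
  -- basic facts about α
  have hcoαL : ∀ (n : ℕ) (m : ℤ), T.co n m α ∈ S.L :=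
    fun n m => S.L_graded n _ (T.coeff_L α hαL m)
  have hα0V : T.toCGA.proj 0 α = 0 := T.toCGA.L_pos α hαL
  have hco0α : ∀ m : ℤ, T.co 0 m α = 0 := fun m => by
    rw [LExt.co_proj, hα0V, map_zero]
  have hBα : T.Bd α := by
    intro n
    obtain ⟨M, hM⟩ := T.coeff_bdd α n
    refine ⟨M, -1, fun m hm => ?_⟩
    rcases hm with h | h
    · exact hM m h
    · show S.proj n (T.coeff m α) = 0
      rw [hαm m (by omega), map_zero]
  have hBpow : ∀ s : ℕ, T.Bd (α ^ s) := by
    intro s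
    induction s with
    | zero => rw [pow_zero]; exact T.Bd_one
    | succ t ih => rw [pow_succ]; exact LExt.Bd_mul ih hBα
  have hVAN : ∀ s : ℕ, 1 ≤ s → ∀ (q : ℕ) (m : ℤ), 0 ≤ m → T.co q m (α ^ s) = 0 := by
    intro s
    induction s with
    | zero => omega
    | succ t ih =>
      intro _ q m hm
      rcases Nat.eq_zero_or_pos t with rfl | ht
      · rw [pow_one]
        show S.proj q (T.coeff m α) = 0
        rw [hαm m hm, map_zero]
      · rw [pow_succ]
        obtain ⟨M, N, hbx⟩ := (hBpow t).uniform q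
        obtain ⟨M', N', hby⟩ := hBα.uniform q
        rw [T.co_mul _ _ q M N hbx M' N' hby m]
        apply Finset.sum_eq_zero
        intro p hp
        apply Finset.sum_eq_zero
        intro j hj
        by_cases hj0 : 0 ≤ j
        · rw [ih ht p j hj0, zero_mul]
        · have : T.co (q - p) (m - j) α = 0 := by
            show S.proj (q - p) (T.coeff (m - j) α) = 0
            rw [hαm (m - j) (by omega), map_zero]
          rw [this, mul_zero]
  -- components of ψ
  have hcoψ : ∀ (q : ℕ) (m : ℤ), T.co q m ψ
      = ∑ s ∈ Finset.range (q+1), ((s.factorial : k)⁻¹) • T.co q m (α ^ s) := by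
    intro q m
    rw [LExt.co_proj, hψd]
    rw [show T.toCGA.proj q (T.toCGA.expS α)
        = ∑ s ∈ Finset.range (q+1), T.toCGA.proj q (((s.factorial : k)⁻¹) • α ^ s) from
      T.toCGA.ssum_proj' _ q]
    rw [map_sum]
    refine Finset.sum_congr rfl fun s _ => ?_
    rw [map_smul, map_smul, ← LExt.co_proj]
  have hBψ : T.Bd ψ := by
    intro n
    have hcomb : ∀ K : ℕ, ∃ M N : ℤ, ∀ s < K, ∀ m, m < M ∨ N < m → T.co n m (α ^ s) = 0 := by
      intro K
      induction K with
      | zero => exact ⟨0, 0, fun s hs => by omega⟩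
      | succ t ih =>
        obtain ⟨M, N, hb⟩ := ih
        obtain ⟨M', N', hb'⟩ := hBpow t n
        refine ⟨min M M', max N N', fun s hs m hm => ?_⟩
        rcases Nat.lt_or_ge s t with h | h
        · exact hb s h m (by omega)
        · have : s = t := by omega
          subst this
          exact hb' m (by omega)
    obtain ⟨M, N, hb⟩ := hcomb (n+1)
    refine ⟨M, N, fun m hm => ?_⟩
    rw [hcoψ n m]
    apply Finset.sum_eq_zero
    intro s hs
    rw [hb s (Finset.mem_range.mp hs) m hm, smul_zero]
  have hψ0 : T.toCGA.proj 0 ψ = 1 := by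
    rw [hψd]
    rw [show T.toCGA.proj 0 (T.toCGA.expS α)
        = ∑ s ∈ Finset.range 1, T.toCGA.proj 0 (((s.factorial : k)⁻¹) • α ^ s) from
      T.toCGA.ssum_proj' _ 0]
    rw [Finset.sum_range_one, pow_zero, Nat.factorial_zero, Nat.cast_one, inv_one, one_smul]
    simp [T.toCGA.proj_one]
  have hco0ψ : ∀ m : ℤ, T.co 0 m ψ = if m = 0 then 1 else 0 := by
    intro m
    rw [LExt.co_proj, hψ0, show (1 : V) = T.ι 1 from (map_one T.ι).symm, T.coeff_ι]
  have hcoψ0 : ∀ q : ℕ, T.co q 0 ψ = S.proj q 1 := by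
    intro q
    rw [hcoψ q 0]
    rw [Finset.sum_eq_single_of_mem 0 (Finset.mem_range.mpr (by omega))]
    · rw [pow_zero, Nat.factorial_zero, Nat.cast_one, inv_one, one_smul,
        show (1 : V) = T.ι 1 from (map_one T.ι).symm, T.co_iota, if_pos rfl]
    · intro s _ hs0
      rw [hVAN s (by omega) q 0 le_rfl, smul_zero]
  -- the equation
  have hE : Dv ψ + T.eps (Δv ψ) = ψ * T.ι c := by
    have hinv := T.toCGA.mul_inv1 ψ hψ0
    calc Dv ψ + T.eps (Δv ψ) = 1 * (Dv ψ + T.eps (Δv ψ)) := (one_mul _).symm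
      _ = (ψ * T.toCGA.inv1 ψ) * (Dv ψ + T.eps (Δv ψ)) := by rw [hinv]
      _ = ψ * (T.toCGA.inv1 ψ * (Dv ψ + T.eps (Δv ψ))) := mul_assoc _ _ _
      _ = ψ * T.ι c := by rw [hlog]
  have hEq : ∀ (n : ℕ) (m : ℤ), d (T.co n m ψ) + δ (T.co n (m-1) ψ)
      = ∑ p ∈ Finset.range (n+1), T.co p m ψ * S.proj (n-p) c := by
    intro n m
    have h1 : T.co n m (Dv ψ) = d (T.co n m ψ) := by
      show S.proj n (T.coeff m (Dv ψ)) = _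
      rw [hDv, ← hd.graded]
      rfl
    have h2 : T.co n m (T.eps (Δv ψ)) = δ (T.co n (m-1) ψ) := by
      show S.proj n (T.coeff m (T.eps (Δv ψ))) = _
      rw [T.coeff_eps, hΔv, ← hδ.graded]
      rfl
    have h3 : T.co n m (ψ * T.ι c)
        = ∑ p ∈ Finset.range (n+1), T.co p m ψ * S.proj (n-p) c := by
      obtain ⟨M, N, hbx⟩ := hBψ.uniform n
      rw [T.co_mul _ _ n M N hbx 0 0
        (fun p _ j hj => by rw [T.co_iota, if_neg (by omega)]) m]
      refine Finset.sum_congr rfl fun p hp => ?_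
      have hp' : p ≤ n := by simp only [Finset.mem_range] at hp; omega
      have hterm : ∀ j ∈ Finset.Icc M N, T.co p j ψ * T.co (n-p) (m-j) (T.ι c)
          = if j = m then T.co p j ψ * S.proj (n-p) c else 0 := by
        intro j _
        rw [T.co_iota]
        by_cases hjm : j = m
        · rw [if_pos (by omega), if_pos hjm]
        · rw [if_neg (by omega), if_neg hjm, mul_zero]
      rw [Finset.sum_congr rfl hterm, Finset.sum_ite_eq']
      by_cases hm : m ∈ Finset.Icc M N
      · rw [if_pos hm]
      · rw [if_neg hm, hbx p hp' m (by rw [Finset.mem_Icc] at hm; omega), zero_mul]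
    have hadd : T.co n m (Dv ψ + T.eps (Δv ψ)) = T.co n m (Dv ψ) + T.co n m (T.eps (Δv ψ)) := by
      show S.proj n (T.coeff m _) = _
      rw [map_add, map_add]
      rfl
    have hcong := congrArg (T.co n m) hE
    rw [hadd, h1, h2, h3] at hcong
    exact hcong
  -- the subalgebra of d-closed elements generated by ker d ∩ L
  set W : Subalgebra k U := Algebra.adjoin k {u : U | u ∈ S.L ∧ d u = 0} with hWdef
  have hWmem : ∀ u : U, u ∈ S.L → d u = 0 → u ∈ W := fun u h1 h2 =>
    Algebra.subset_adjoin ⟨h1, h2⟩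
  have hWprop : ∀ u ∈ W, d u = 0 ∧ d (δ u) = 0 :=
    adjoin_ker_stable d δ hd.leibniz hδ.leibniz _ (fun u hu => ⟨hu.2, hker u hu.1 hu.2⟩)
  -- the main double induction
  have main : ∀ (n : ℕ) (m : ℤ), d (T.co n m α) = 0 := by
    intro n
    induction n using Nat.strong_induction_on with
    | _ n hIH =>
    rcases Nat.eq_zero_or_pos n with rfl | hn
    · intro m
      rw [hco0α m, map_zero]
    have hG1 : ∀ p, p < n → ∀ m : ℤ, T.co p m α ∈ W := fun p hp m =>
      hWmem _ (hcoαL p m) (hIH p hp m)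
    have hG2 : ∀ s : ℕ, ∀ p, p < n → ∀ m : ℤ, T.co p m (α ^ s) ∈ W := by
      intro s
      induction s with
      | zero =>
        intro p _ m
        rw [pow_zero, show (1 : V) = T.ι 1 from (map_one T.ι).symm, T.co_iota]
        rcases eq_or_ne m 0 with rfl | hm0
        · rw [if_pos rfl, S.proj_one]
          split
          · exact one_mem W
          · exact zero_mem W
        · rw [if_neg hm0]; exact zero_mem W
      | succ t ih =>
        intro p hp m
        rw [pow_succ]
        obtain ⟨M, N, hbx⟩ := (hBpow t).uniform p
        obtain ⟨M', N', hby⟩ := hBα.uniform p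
        rw [T.co_mul _ _ p M N hbx M' N' hby m]
        refine sum_mem fun q hq => sum_mem fun j _ => ?_
        have hq' : q ≤ p := by simp only [Finset.mem_range] at hq; omega
        exact mul_mem (ih q (by omega) j) (hG1 (p - q) (by omega) (m - j))
    have hG3 : ∀ (t : ℕ) (m : ℤ), T.co n m (α ^ (t+2)) ∈ W := by
      intro t m
      rw [show α ^ (t+2) = α * α ^ (t+1) from pow_succ' α (t+1)]
      obtain ⟨M, N, hbx⟩ := hBα.uniform n
      obtain ⟨M', N', hby⟩ := (hBpow (t+1)).uniform n
      rw [T.co_mul _ _ n M N hbx M' N' hby m]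
      refine sum_mem fun q hq => sum_mem fun j _ => ?_
      have hq' : q ≤ n := by simp only [Finset.mem_range] at hq; omega
      rcases Nat.eq_zero_or_pos q with rfl | hq0
      · rw [hco0α j, zero_mul]; exact zero_mem W
      rcases Nat.lt_or_ge q n with hqn | hqn
      · exact mul_mem (hG1 q hqn j) (hG2 (t+1) (n - q) (by omega) (m - j))
      · have : q = n := by omega
        subst this
        have hz : T.co 0 (m - j) (α ^ (t+1)) = 0 := by
          rw [LExt.co_proj, T.toCGA.proj_pow_eq_zero α hα0V (t+1) 0 (by omega), map_zero]
        rw [Nat.sub_self, hz, mul_zero]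
        exact zero_mem W
    have hG4 : ∀ p, p < n → ∀ m : ℤ, T.co p m ψ ∈ W := by
      intro p hp m
      rw [hcoψ p m]
      exact sum_mem fun s _ => W.smul_mem (hG2 s p hp m) _
    set R : ℤ → U := fun m =>
      ∑ s ∈ (Finset.range (n+1)).erase 1, ((s.factorial : k)⁻¹) • T.co n m (α ^ s) with hRdef
    have hsplit : ∀ m : ℤ, T.co n m ψ = T.co n m α + R m := by
      intro m
      rw [hcoψ n m, ← Finset.add_sum_erase _ _ (Finset.mem_range.mpr (by omega : 1 < n+1))]
      rw [pow_one, Nat.factorial_one, Nat.cast_one, inv_one, one_smul]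
    have hRW : ∀ m : ℤ, R m ∈ W := by
      intro m
      refine sum_mem fun s hs => W.smul_mem ?_ _
      have hs1 : s ≠ 1 := Finset.ne_of_mem_erase hs
      rcases Nat.eq_zero_or_pos s with rfl | hs0
      · rw [pow_zero, show (1 : V) = T.ι 1 from (map_one T.ι).symm, T.co_iota]
        rcases eq_or_ne m 0 with rfl | hm0
        · rw [if_pos rfl, S.proj_one, if_neg (by omega)]
          exact zero_mem W
        · rw [if_neg hm0]; exact zero_mem W
      · obtain ⟨t, rfl⟩ : ∃ t, s = t + 2 := ⟨s - 2, by omega⟩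
        exact hG3 t m
    have hc0 : S.proj 0 c = 0 := S.L_pos c hc
    have hcd : ∀ j : ℕ, 1 ≤ j → j < n → d (S.proj j c) = 0 := by
      intro j hj1 hjn
      have he := hEq j 0
      have hL : d (T.co j 0 ψ) = 0 := by
        rw [hcoψ0 j, S.proj_one, if_neg (by omega), map_zero]
      have hRs : ∑ p ∈ Finset.range (j+1), T.co p 0 ψ * S.proj (j-p) c = S.proj j c := by
        rw [Finset.sum_eq_single_of_mem 0 (Finset.mem_range.mpr (by omega))]
        · rw [hcoψ0 0, S.proj_one, if_pos rfl, one_mul, Nat.sub_zero]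
        · intro p _ hp0
          rw [hcoψ0 p, S.proj_one, if_neg hp0, zero_mul]
      rw [hL, zero_add, hRs] at he
      rw [← he]
      exact (hWprop _ (hG4 j hjn (0-1 : ℤ))).2
    obtain ⟨Mb, hMb⟩ := T.coeff_bdd α n
    have hstep : ∀ m : ℤ, d (T.co n (m-1) α) = 0 → d (T.co n m α) = 0 := by
      intro m hprev
      by_cases hm : 0 ≤ m
      · have hz : T.co n m α = 0 := by
          show S.proj n (T.coeff m α) = 0
          rw [hαm m hm, map_zero]
        rw [hz, map_zero]
      · have he := hEq n m
        have hRHS : d (∑ p ∈ Finset.range (n+1), T.co p m ψ * S.proj (n-p) c) = 0 := by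
          rw [map_sum]
          apply Finset.sum_eq_zero
          intro p hp
          have hp' : p ≤ n := by simp only [Finset.mem_range] at hp; omega
          rcases Nat.eq_zero_or_pos p with rfl | hp0
          · rw [hco0ψ m, if_neg (by omega), zero_mul, map_zero]
          rcases Nat.lt_or_ge p n with hpn | hpn
          · rw [hd.leibniz, (hWprop _ (hG4 p hpn m)).1, hcd (n-p) (by omega) (by omega),
              zero_mul, mul_zero, add_zero]
          · have : p = n := by omega
            subst this
            rw [Nat.sub_self, hc0, mul_zero, map_zero]
        rw [hsplit m, hsplit (m-1), map_add, map_add] at he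
        rw [(hWprop _ (hRW m)).1, add_zero] at he
        have e2 : d (T.co n m α)
            = (∑ p ∈ Finset.range (n+1), T.co p m ψ * S.proj (n-p) c)
              - (δ (T.co n (m-1) α) + δ (R (m-1))) := eq_sub_of_add_eq he
        have hdd : d (d (T.co n m α)) = 0 := by
          rw [e2, map_sub, hRHS, map_add, hker _ (hcoαL n (m-1)) hprev,
            (hWprop _ (hRW (m-1))).2]
          simp
        exact hdec₂ _ (hd.mapsL _ (hcoαL n m)) hdd ⟨T.co n m α, hcoαL n m, rfl⟩
    have hall : ∀ t : ℕ, d (T.co n (Mb - 1 + t) α) = 0 := by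
      intro t
      induction t with
      | zero =>
        have hz : T.co n (Mb - 1 + ((0:ℕ):ℤ)) α = 0 := hMb _ (by omega)
        rw [hz, map_zero]
      | succ t iht =>
        have harg : (Mb - 1 + ((t+1:ℕ):ℤ)) - 1 = Mb - 1 + (t:ℤ) := by push_cast; ring
        exact hstep _ (by rw [harg]; exact iht)
    intro m
    rcases lt_or_ge m Mb with hm | hm
    · have hz : T.co n m α = 0 := hMb m hm
      rw [hz, map_zero]
    · obtain ⟨t, ht⟩ : ∃ t : ℕ, m = Mb - 1 + t := ⟨(m - Mb + 1).toNat, by omega⟩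
      rw [ht]
      exact hall t
  -- conclude
  apply T.coeff_ext
  intro m
  rw [map_zero, hDv]
  apply S.ext_zero
  intro q
  rw [← hd.graded]
  exact main q m
end
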